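/- arXiv:1903.00541 — 9 statements merged into one kernel-verified Lean document; each statement's English description precedes it below -/
import Mathlib

section
/- Let 1 ≤ p < q ≤ ∞ with 1/p = 1/q + 1/s, and let σ = (σ_k)_{k≥1} be a non-increasing sequence of positive real numbers with σ_k → 0. Then there exists a constant C > 0 such that for all n ≥ 1 the n-th entropy number of the diagonal operator D_σ : ℓ_p → ℓ_q satisfies e_n(D_σ) ≤ C · sup_{k≥1} k^{-1/s} · ( (σ_1 + k^{1/s} σ_k)·(σ_2 + k^{1/s} σ_k)·…·(σ_k + k^{1/s} σ_k) / n )^{1/k}. -/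
/-!
Let `t` be the supremum on the right and `d` the first index with `σ_d < 12 t`. Rounding the
first `d` coordinates of `D x` to the grid `ε ℤ`, `ε = 12 t / d^{1/q}`, sorts the unit ball into
classes; two points of a class have images at distance `≤ ε d^{1/q} + 2 σ_d < 36 t`. By Hölder,
the grid vectors `m` that occur satisfy `∑ |m_i| b_i ≤ d` with `b_i = 6 t d^{1/s} / σ_i`, and
weighting each of them by `∏ exp (1 - b_i |m_i|) ≥ 1` bounds their number by a product of
geometric series, `∏_{i<d} 2e (1 + 1 / b_i)`. Since `4e ≤ 12 ≤ σ_{d-1} / t`, each factor is at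
most `(σ_i + d^{1/s} σ_{d-1}) / (d^{1/s} t)`, and the product of these is `≤ n` because the term
of index `d` of the supremum is `≤ t`.
-/

open Metric Filter
open scoped ENNReal

/-- The `n`-th (inner) entropy number of a set `T` in a normed space: the infimum of all
`ε > 0` such that `T` can be covered by `n` closed balls of radius `ε`. -/
noncomputable def entropyNumber {Y : Type*} [SeminormedAddCommGroup Y]
    (n : ℕ) (T : Set Y) : ℝ :=
  sInf {ε : ℝ | 0 < ε ∧ ∃ y : Fin n → Y, T ⊆ ⋃ i, Metric.closedBall (y i) ε}

open Finset Real

theorem entropyNumber_le_of_subset_biUnion {Y : Type*} [SeminormedAddCommGroup Y] {n : ℕ}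
    {T : Set Y} {ρ : ℝ} (hρ : 0 < ρ) (t : Finset Y) (ht : #t ≤ n)
    (hT : T ⊆ ⋃ y ∈ t, closedBall y ρ) :
    entropyNumber n T ≤ ρ := by
  refine csInf_le ⟨0, fun ε hε => hε.1.le⟩ ⟨hρ, fun i => if h : (i : ℕ) < #t then
    (t.equivFin.symm ⟨i, h⟩ : Y) else 0, fun z hz => ?_⟩
  obtain ⟨y, hy, hzy⟩ := Set.mem_iUnion₂.1 (hT hz)
  let j := t.equivFin ⟨y, hy⟩
  refine Set.mem_iUnion.2 ⟨⟨j, j.2.trans_le ht⟩, ?_⟩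
  simpa [j] using hzy

theorem entropyNumber_image_le {X Y ι : Type*} [SeminormedAddCommGroup Y] {n : ℕ}
    (g : X → Y) (S : Set X) (κ : X → ι) (s : Finset ι) (hs : #s ≤ n)
    (hκ : ∀ x ∈ S, κ x ∈ s) {r : ℝ} (hr : 0 < r)
    (hdiam : ∀ x ∈ S, ∀ x' ∈ S, κ x = κ x' → dist (g x) (g x') ≤ r) :
    entropyNumber n (g '' S) ≤ r := by
  classical
  let rep : ι → Y := fun i => if h : ∃ x ∈ S, κ x = i then g h.choose else 0
  refine entropyNumber_le_of_subset_biUnion hr (s.image rep) (card_image_le.trans hs) ?_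
  rintro - ⟨x, hx, rfl⟩
  have h : ∃ x' ∈ S, κ x' = κ x := ⟨x, hx, rfl⟩
  refine Set.mem_iUnion₂.2 ⟨rep (κ x), mem_image_of_mem _ (hκ x hx), ?_⟩
  simp only [rep, dif_pos h]
  exact hdiam x hx _ h.choose_spec.1 h.choose_spec.2.symm

namespace lp

variable {α : Type*} {E F : α → Type*} [∀ i, NormedAddCommGroup (E i)]
  [∀ i, NormedAddCommGroup (F i)] {p q : ℝ≥0∞}

theorem norm_le_norm_of_exponent_le (hp : p ≠ 0) (hpq : p ≤ q) {g : lp E q} {f : lp F p}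
    (h : ∀ i, ‖g i‖ ≤ ‖f i‖) : ‖g‖ ≤ ‖f‖ := by
  obtain rfl | hq := eq_or_ne q ∞
  · exact norm_le_of_forall_le (norm_nonneg' f) fun i => (h i).trans (norm_apply_le_norm hp f i)
  have hp0 : 0 < p.toReal := ENNReal.toReal_pos hp (ne_top_of_le_ne_top hq hpq)
  have hpq' : 0 ≤ q.toReal - p.toReal := sub_nonneg.2 (ENNReal.toReal_mono hq hpq)
  have split (a : ℝ) (ha : 0 ≤ a) : a ^ q.toReal = a ^ (q.toReal - p.toReal) * a ^ p.toReal := by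
    rw [← rpow_add_of_nonneg ha hpq' hp0.le, sub_add_cancel]
  refine norm_le_of_forall_sum_le (hp0.trans_le (by linarith)) (norm_nonneg' f) fun s => ?_
  calc ∑ i ∈ s, ‖g i‖ ^ q.toReal
      ≤ ∑ i ∈ s, ‖f‖ ^ (q.toReal - p.toReal) * ‖f i‖ ^ p.toReal := by
        gcongr with i
        calc ‖g i‖ ^ q.toReal ≤ ‖f i‖ ^ q.toReal := by gcongr; exact h i
          _ ≤ _ := by
            rw [split _ (norm_nonneg _)]
            gcongr
            exact norm_apply_le_norm hp f i
    _ ≤ ‖f‖ ^ (q.toReal - p.toReal) * ‖f‖ ^ p.toReal := by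
        rw [← mul_sum]
        exact mul_le_mul_of_nonneg_left (sum_rpow_le_norm_rpow hp0 f s)
          (rpow_nonneg (norm_nonneg' f) _)
    _ = ‖f‖ ^ q.toReal := (split _ (norm_nonneg' f)).symm

theorem norm_le_of_forall_norm_le_of_support_subset (hq : q ≠ 0) {u : lp E q} (s : Finset α)
    {δ : ℝ} (hδ : 0 ≤ δ) (hu : ∀ i ∈ s, ‖u i‖ ≤ δ) (hs : ∀ i ∉ s, u i = 0) :
    ‖u‖ ≤ δ * #s ^ (1 / q).toReal := by
  classical
  have hu' : ∀ i, ‖u i‖ ≤ δ := fun i => by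
    by_cases hi : i ∈ s
    · exact hu i hi
    · simpa [hs i hi] using hδ
  obtain rfl | hq' := eq_or_ne q ∞
  · simpa using norm_le_of_forall_le hδ hu'
  have hq0 : 0 < q.toReal := ENNReal.toReal_pos hq hq'
  refine norm_le_of_forall_sum_le hq0 (by positivity) fun t => ?_
  calc ∑ i ∈ t, ‖u i‖ ^ q.toReal ≤ ∑ i ∈ s, ‖u i‖ ^ q.toReal := by
        rw [← sum_subset (inter_subset_left (s₁ := t) (s₂ := s)) fun i hit hi => by
          simp [hs i fun his => hi (mem_inter.2 ⟨hit, his⟩), hq0.ne']]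
        exact sum_le_sum_of_subset_of_nonneg inter_subset_right fun _ _ _ => by positivity
    _ ≤ ∑ i ∈ s, δ ^ q.toReal := by gcongr with i hi; exact hu i hi
    _ = (δ * #s ^ (1 / q).toReal) ^ q.toReal := by
        rw [sum_const, nsmul_eq_mul, mul_rpow hδ (by positivity), ← rpow_mul (by positivity),
          ENNReal.toReal_div, ENNReal.toReal_one, one_div_mul_cancel hq0.ne', rpow_one, mul_comm]

theorem norm_le_of_bounded_on_of_dominated_off [Fact (1 ≤ q)] (hp : p ≠ 0) (hpq : p ≤ q)
    (g : lp E q) (f : lp F p) (s : Finset α) {δ : ℝ} (hδ : 0 ≤ δ) (hs : ∀ i ∈ s, ‖g i‖ ≤ δ)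
    (hf : ∀ i ∉ s, ‖g i‖ ≤ ‖f i‖) :
    ‖g‖ ≤ δ * #s ^ (1 / q).toReal + ‖f‖ := by
  classical
  let h : lp E q := ⟨fun i => if i ∈ s then 0 else g i,
    (lp.memℓp g).mono' fun i => by split_ifs <;> simp⟩
  have hgh (i : α) : (g - h) i = if i ∈ s then g i else 0 := by
    change g i - (if i ∈ s then 0 else g i) = _
    split_ifs <;> simp
  have hq : q ≠ 0 := (zero_lt_one.trans_le (Fact.out : (1 : ℝ≥0∞) ≤ q)).ne'
  calc ‖g‖ = ‖(g - h) + h‖ := by rw [sub_add_cancel]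
    _ ≤ ‖g - h‖ + ‖h‖ := norm_add_le _ _
    _ ≤ δ * #s ^ (1 / q).toReal + ‖f‖ := by
      refine add_le_add (norm_le_of_forall_norm_le_of_support_subset hq s hδ (fun i hi => ?_)
        fun i hi => ?_) (norm_le_norm_of_exponent_le hp hpq fun i => ?_)
      · simpa [hgh, hi] using hs i hi
      · simp [hgh, hi]
      · by_cases hi : i ∈ s
        · simp [h, hi]
        · simpa [h, hi] using hf i hi

theorem sum_norm_le_card_rpow_mul_norm (hp : 1 ≤ p.toReal) (f : lp E p) (s : Finset α) :
    ∑ i ∈ s, ‖f i‖ ≤ (#s : ℝ) ^ (1 - 1 / p.toReal) * ‖f‖ := by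
  have hp0 : 0 < p.toReal := zero_lt_one.trans_le hp
  have hf : 0 ≤ ‖f‖ := norm_nonneg' f
  rw [← rpow_le_rpow_iff (sum_nonneg fun _ _ => norm_nonneg _) (by positivity) hp0]
  calc (∑ i ∈ s, ‖f i‖) ^ p.toReal ≤ (#s : ℝ) ^ (p.toReal - 1) * ∑ i ∈ s, ‖f i‖ ^ p.toReal :=
        rpow_sum_le_const_mul_sum_rpow_of_nonneg s hp fun _ _ => norm_nonneg _
    _ ≤ (#s : ℝ) ^ (p.toReal - 1) * ‖f‖ ^ p.toReal := by
        gcongr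
        exact sum_rpow_le_norm_rpow hp0 f s
    _ = ((#s : ℝ) ^ (1 - 1 / p.toReal) * ‖f‖) ^ p.toReal := by
        rw [mul_rpow (by positivity) hf, ← rpow_mul (by positivity)]
        congr 2
        field_simp

end lp

theorem abs_round_le_two_mul_abs {α : Type*} [Field α] [LinearOrder α] [IsStrictOrderedRing α]
    [FloorRing α] (x : α) : |(round x : α)| ≤ 2 * |x| := by
  by_cases hx : |x| < 1 / 2
  · rw [round_eq_zero_iff.2 ⟨by linarith [neg_abs_le x], by linarith [le_abs_self x]⟩]
    simp
  · calc |(round x : α)| = |x - (x - round x)| := by rw [sub_sub_cancel]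
      _ ≤ |x| + |x - round x| := abs_sub _ _
      _ ≤ 2 * |x| := by linarith [abs_sub_round x]

theorem abs_sub_le_one_of_round_eq {α : Type*} [Field α] [LinearOrder α] [IsStrictOrderedRing α]
    [FloorRing α] {a b : α} (h : round a = round b) : |a - b| ≤ 1 := by
  have ha := abs_sub_round a
  have hb := abs_sub_round b
  rw [h] at ha
  calc |a - b| ≤ |a - round b| + |round b - b| := abs_sub_le _ _ _
    _ ≤ 1 := by rw [abs_sub_comm (round b : α)]; linarith

theorem sum_pow_natAbs_le (S : Finset ℤ) {r : ℝ} (h0 : 0 ≤ r) (h1 : r < 1) :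
    ∑ z ∈ S, r ^ z.natAbs ≤ 2 * (1 - r)⁻¹ := by
  classical
  have hfiber (j : ℕ) : #{z ∈ S | z.natAbs = j} ≤ 2 := by
    refine (card_le_card fun z hz => ?_).trans (card_le_two (a := (j : ℤ)) (b := -j))
    rw [mem_filter] at hz
    rcases Int.natAbs_eq z with h | h <;> rw [h, hz.2] <;> simp
  rw [sum_comp (fun j => r ^ j) Int.natAbs]
  calc ∑ j ∈ S.image Int.natAbs, #{z ∈ S | z.natAbs = j} • r ^ j
      ≤ ∑ j ∈ S.image Int.natAbs, 2 * r ^ j := by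
        gcongr with j
        rw [nsmul_eq_mul]
        gcongr
        exact_mod_cast hfiber j
    _ ≤ 2 * ∑' j : ℕ, r ^ j := by
        rw [← mul_sum]
        gcongr
        exact Summable.sum_le_tsum _ (fun _ _ => by positivity) (summable_geometric_of_lt_one h0 h1)
    _ = 2 * (1 - r)⁻¹ := by rw [tsum_geometric_of_lt_one h0 h1]

theorem inv_one_sub_exp_neg_le {b : ℝ} (hb : 0 < b) : (1 - exp (-b))⁻¹ ≤ 1 + 1 / b := by
  have h : exp (-b) ≤ (1 + b)⁻¹ := by
    rw [exp_neg]
    exact inv_anti₀ (by positivity) (by linarith [add_one_le_exp b])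
  calc (1 - exp (-b))⁻¹ ≤ (1 - (1 + b)⁻¹)⁻¹ := by
        gcongr
        · rw [sub_pos, inv_lt_one₀ (by positivity)]
          linarith
    _ = 1 + 1 / b := by
        rw [show 1 - (1 + b)⁻¹ = b / (1 + b) by field_simp; ring, inv_div]
        field_simp
        ring

theorem sum_exp_neg_mul_abs_le (S : Finset ℤ) {b : ℝ} (hb : 0 < b) :
    ∑ z ∈ S, exp (-(b * |(z : ℝ)|)) ≤ 2 * (1 + 1 / b) := by
  have h (z : ℤ) : exp (-(b * |(z : ℝ)|)) = exp (-b) ^ z.natAbs := by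
    rw [← exp_nat_mul, Nat.cast_natAbs, Int.cast_abs]
    ring_nf
  simp_rw [h]
  exact (sum_pow_natAbs_le S (exp_pos _).le (exp_lt_one_iff.2 (neg_lt_zero.2 hb))).trans
    (by gcongr; exact inv_one_sub_exp_neg_le hb)

theorem card_le_prod_of_sum_abs_mul_le {ι : Type*} [Fintype ι] [DecidableEq ι] {b : ι → ℝ}
    (hb : ∀ i, 0 < b i) (M : Finset (ι → ℤ))
    (hM : ∀ m ∈ M, ∑ i, |(m i : ℝ)| * b i ≤ Fintype.card ι) :
    (#M : ℝ) ≤ ∏ i, 2 * exp 1 * (1 + 1 / b i) := by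
  let w (i : ι) (z : ℤ) : ℝ := exp (1 - b i * |(z : ℝ)|)
  calc (#M : ℝ) = ∑ m ∈ M, 1 := by simp
    _ ≤ ∑ m ∈ M, ∏ i, w i (m i) := sum_le_sum fun m hm => by
        rw [← exp_sum]
        refine one_le_exp ?_
        rw [sum_sub_distrib, sum_const, card_univ, nsmul_one, sub_nonneg]
        simpa [mul_comm] using hM m hm
    _ ≤ ∑ m ∈ Fintype.piFinset fun i => M.image (· i), ∏ i, w i (m i) :=
        sum_le_sum_of_subset_of_nonneg
          (fun m hm => Fintype.mem_piFinset.2 fun i => mem_image_of_mem _ hm)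
          fun _ _ _ => by positivity
    _ = ∏ i, ∑ z ∈ M.image (· i), w i z := (prod_univ_sum _ _).symm
    _ ≤ ∏ i, 2 * exp 1 * (1 + 1 / b i) := prod_le_prod (fun _ _ => by positivity) fun i _ => by
        simp_rw [w, sub_eq_add_neg, exp_add, ← mul_sum]
        rw [mul_comm 2, mul_assoc]
        gcongr
        exact sum_exp_neg_mul_abs_le _ (hb i)

/-- The term with index `k + 1` of the supremum in the theorem, for `r = 1/s`. -/
noncomputable def entropyProfile (σ : ℕ → ℝ) (r : ℝ) (n k : ℕ) : ℝ :=
  (k + 1 : ℝ) ^ (-r) *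
    ((∏ i ∈ range (k + 1), (σ i + (k + 1 : ℝ) ^ r * σ k)) / n) ^ (1 / (k + 1 : ℝ))

theorem rpow_one_div_succ_le_iff {a y : ℝ} (ha : 0 ≤ a) (hy : 0 ≤ y) (k : ℕ) :
    a ^ (1 / (k + 1 : ℝ)) ≤ y ↔ a ≤ y ^ (k + 1) := by
  rw [one_div, rpow_inv_le_iff_of_pos ha hy (by positivity), ← rpow_natCast]
  push_cast
  rfl

section entropyProfile

variable {σ : ℕ → ℝ} {r : ℝ} {n : ℕ}

theorem entropyProfile_prod_pos (hσ : ∀ k, 0 < σ k) (k : ℕ) :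
    0 < ∏ i ∈ range (k + 1), (σ i + (k + 1 : ℝ) ^ r * σ k) :=
  prod_pos fun i _ => by have := hσ i; have := hσ k; positivity

theorem entropyProfile_pos (hσ : ∀ k, 0 < σ k) (hn : 1 ≤ n) (k : ℕ) :
    0 < entropyProfile σ r n k := by
  have := entropyProfile_prod_pos (r := r) hσ k
  have : (0 : ℝ) < n := by exact_mod_cast hn
  unfold entropyProfile
  positivity

theorem entropyProfile_le (hσ : ∀ k, 0 < σ k) (hσa : Antitone σ) (hr : 0 ≤ r) (hn : 1 ≤ n)
    (k : ℕ) : entropyProfile σ r n k ≤ 2 * σ 0 := by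
  set A : ℝ := (k + 1 : ℝ) ^ r
  have hA : 1 ≤ A := one_le_rpow (by linarith [k.cast_nonneg (α := ℝ)]) hr
  have hσ0 := hσ 0
  have hP : ∏ i ∈ range (k + 1), (σ i + A * σ k) ≤ (A * (2 * σ 0)) ^ (k + 1) := by
    rw [pow_eq_prod_const]
    refine prod_le_prod (fun i _ => by have := hσ i; have := hσ k; positivity) fun i _ => ?_
    have := hσa (Nat.zero_le i)
    have := hσa (Nat.zero_le k)
    nlinarith
  have hroot : ((∏ i ∈ range (k + 1), (σ i + A * σ k)) / n) ^ (1 / (k + 1 : ℝ)) ≤ A * (2 * σ 0) :=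
    (rpow_one_div_succ_le_iff (div_nonneg (entropyProfile_prod_pos hσ k).le n.cast_nonneg)
      (by positivity) k).2
      ((div_le_self (entropyProfile_prod_pos hσ k).le (by exact_mod_cast hn)).trans hP)
  calc entropyProfile σ r n k ≤ (k + 1 : ℝ) ^ (-r) * (A * (2 * σ 0)) := by
        unfold entropyProfile
        gcongr
    _ = 2 * σ 0 := by
        rw [← mul_assoc, ← rpow_add (by positivity), neg_add_cancel, rpow_zero, one_mul]

theorem prod_le_of_entropyProfile_le (hσ : ∀ k, 0 < σ k) (hn : 1 ≤ n) {k : ℕ} {t : ℝ}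
    (ht : entropyProfile σ r n k ≤ t) :
    ∏ i ∈ range (k + 1), (σ i + (k + 1 : ℝ) ^ r * σ k) ≤ n * ((k + 1 : ℝ) ^ r * t) ^ (k + 1) := by
  have hn0 : (0 : ℝ) < n := by exact_mod_cast hn
  have hA : 0 < (k + 1 : ℝ) ^ r := by positivity
  have hroot : ((∏ i ∈ range (k + 1), (σ i + (k + 1 : ℝ) ^ r * σ k)) / n) ^ (1 / (k + 1 : ℝ))
      ≤ (k + 1 : ℝ) ^ r * t := by
    calc _ = (k + 1 : ℝ) ^ r * entropyProfile σ r n k := by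
          rw [entropyProfile, ← mul_assoc, ← rpow_add (by positivity), add_neg_cancel, rpow_zero,
            one_mul]
      _ ≤ (k + 1 : ℝ) ^ r * t := by gcongr
  have ht0 : 0 ≤ t := (entropyProfile_pos hσ hn k).le.trans ht
  rw [rpow_one_div_succ_le_iff (div_nonneg (entropyProfile_prod_pos hσ k).le hn0.le)
    (by positivity), div_le_iff₀ hn0] at hroot
  linarith

theorem prod_two_mul_exp_one_le (hσ : ∀ k, 0 < σ k) (hn : 1 ≤ n) {t : ℝ}
    (ht : 0 < t) {k : ℕ} (hk : 12 * t ≤ σ k) (hprof : entropyProfile σ r n k ≤ t) :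
    ∏ i : Fin (k + 1), 2 * exp 1 * (1 + σ i / (6 * t * (k + 1 : ℝ) ^ r)) ≤ n := by
  set A : ℝ := (k + 1 : ℝ) ^ r
  have hA : 0 < A := by positivity
  calc ∏ i : Fin (k + 1), 2 * exp 1 * (1 + σ i / (6 * t * A))
      ≤ ∏ i : Fin (k + 1), (σ i + A * σ k) / (A * t) :=
        prod_le_prod (fun i _ => by have := hσ i; positivity) fun i _ => by
          have hσi := hσ i
          have he := exp_one_lt_three
          have : 2 * exp 1 * (1 + σ i / (6 * t * A)) * (A * t)
              = 2 * exp 1 * (A * t) + exp 1 / 3 * σ i := by field_simp; ring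
          rw [le_div_iff₀ (by positivity), this]
          nlinarith [mul_pos hA ht, exp_pos 1]
    _ = (∏ i ∈ range (k + 1), (σ i + A * σ k)) / (A * t) ^ (k + 1) := by
        rw [prod_div_distrib, prod_const, card_univ, Fintype.card_fin,
          Fin.prod_univ_eq_prod_range (fun i => σ i + A * σ k)]
    _ ≤ n := by
        rw [div_le_iff₀ (by positivity)]
        exact prod_le_of_entropyProfile_le hσ hn hprof

end entropyProfile

theorem abs_round_le_ceil {p : ℝ≥0∞} [Fact (1 ≤ p)] {σ : ℕ → ℝ} (hσ : ∀ k, 0 < σ k)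
    (hσa : Antitone σ) {x : lp (fun _ : ℕ => ℝ) p} (hx : ‖x‖ ≤ 1) {ε : ℝ} (hε : 0 < ε) (i : ℕ) :
    |round (σ i * x i / ε)| ≤ ⌈2 * σ 0 / ε⌉ := by
  have hxi : |x i| ≤ 1 :=
    (lp.norm_apply_le_norm (zero_lt_one.trans_le (Fact.out : (1 : ℝ≥0∞) ≤ p)).ne' x i).trans hx
  have hσi := hσ i
  have hσ0 := hσ 0
  have h := abs_round_le_two_mul_abs (σ i * x i / ε)
  rw [abs_div, abs_mul, abs_of_pos hσi, abs_of_pos hε] at h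
  have : |(round (σ i * x i / ε) : ℝ)| ≤ ⌈2 * σ 0 / ε⌉ := calc
    _ ≤ 2 * (σ i * |x i| / ε) := h
    _ ≤ 2 * (σ 0 * 1 / ε) := by gcongr; exact hσa (Nat.zero_le _)
    _ ≤ ⌈2 * σ 0 / ε⌉ := by rw [mul_one, ← mul_div_assoc]; exact Int.le_ceil _
  exact_mod_cast this

theorem sum_abs_round_mul_le {p : ℝ≥0∞} {σ : ℕ → ℝ} (hp : 1 ≤ p.toReal) (hσ : ∀ k, 0 < σ k)
    {x : lp (fun _ : ℕ => ℝ) p} (hx : ‖x‖ ≤ 1) {ε : ℝ} (hε : 0 < ε) (d : ℕ) :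
    ∑ i : Fin d, |(round (σ i * x i / ε) : ℝ)| * (ε / 2 * (d : ℝ) ^ (1 / p.toReal) / σ i) ≤ d := by
  have hd := d.cast_nonneg (α := ℝ)
  calc ∑ i : Fin d, |(round (σ i * x i / ε) : ℝ)| * (ε / 2 * (d : ℝ) ^ (1 / p.toReal) / σ i)
      ≤ ∑ i : Fin d, (d : ℝ) ^ (1 / p.toReal) * ‖x i‖ := sum_le_sum fun i _ => by
        have hσi := hσ i
        have h := abs_round_le_two_mul_abs (σ i * x i / ε)
        rw [abs_div, abs_mul, abs_of_pos hσi, abs_of_pos hε] at h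
        calc |(round (σ i * x i / ε) : ℝ)| * (ε / 2 * (d : ℝ) ^ (1 / p.toReal) / σ i)
            ≤ 2 * (σ i * |x i| / ε) * (ε / 2 * (d : ℝ) ^ (1 / p.toReal) / σ i) := by gcongr
          _ = (d : ℝ) ^ (1 / p.toReal) * ‖x i‖ := by rw [Real.norm_eq_abs]; field_simp
    _ = (d : ℝ) ^ (1 / p.toReal) * ∑ i ∈ range d, ‖x i‖ := by
        rw [← mul_sum, Fin.sum_univ_eq_sum_range (fun i => ‖x i‖) d]
    _ ≤ (d : ℝ) ^ (1 / p.toReal) * ((d : ℝ) ^ (1 - 1 / p.toReal) * 1) := by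
        gcongr
        exact (lp.sum_norm_le_card_rpow_mul_norm hp x _).trans (by rw [card_range]; gcongr)
    _ = d := by
        rcases hd.eq_or_lt with h0 | h0
        · rw [← h0, zero_rpow (by positivity), zero_mul]
        · rw [mul_one, ← rpow_add h0, add_sub_cancel, rpow_one]

section DiagonalOperator

variable {p q : ℝ≥0∞} [Fact (1 ≤ p)] [Fact (1 ≤ q)] {σ : ℕ → ℝ}
  {D : lp (fun _ : ℕ => ℝ) p →L[ℝ] lp (fun _ : ℕ => ℝ) q}

theorem dist_diagonal_le (hpq : p ≤ q) (hD : ∀ x k, D x k = σ k * x k) (hσ : ∀ k, 0 < σ k)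
    (hσa : Antitone σ) {x x' : lp (fun _ : ℕ => ℝ) p} (hx : ‖x‖ ≤ 1) (hx' : ‖x'‖ ≤ 1) (d : ℕ)
    {δ : ℝ} (hδ : 0 ≤ δ) (hhead : ∀ i < d, |σ i * x i - σ i * x' i| ≤ δ) :
    dist (D x) (D x') ≤ δ * d ^ (1 / q).toReal + 2 * σ d := by
  have hp : p ≠ 0 := (zero_lt_one.trans_le (Fact.out : (1 : ℝ≥0∞) ≤ p)).ne'
  have hcoord (i : ℕ) : (D x - D x') i = σ i * x i - σ i * x' i := by
    rw [lp.coeFn_sub, Pi.sub_apply, hD, hD]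
  rw [dist_eq_norm]
  calc ‖D x - D x'‖ ≤ δ * #(range d) ^ (1 / q).toReal + ‖σ d • (x - x')‖ := by
        refine lp.norm_le_of_bounded_on_of_dominated_off hp hpq _ _ _ hδ
          (fun i hi => by simpa [hcoord] using hhead i (mem_range.1 hi)) fun i hi => ?_
        rw [hcoord, ← mul_sub, lp.coeFn_smul, lp.coeFn_sub, Pi.smul_apply, Pi.sub_apply,
          smul_eq_mul, norm_mul, norm_mul, Real.norm_of_nonneg (hσ i).le,
          Real.norm_of_nonneg (hσ d).le]
        exact mul_le_mul_of_nonneg_right (hσa (not_lt.1 (mt mem_range.2 hi))) (norm_nonneg _)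
    _ ≤ δ * d ^ (1 / q).toReal + 2 * σ d := by
        have : ‖x - x'‖ ≤ 2 := (norm_sub_le x x').trans (by linarith)
        rw [card_range, norm_smul, Real.norm_of_nonneg (hσ d).le, mul_comm 2]
        gcongr
        exact (hσ d).le

theorem entropyNumber_diagonal_le_of_lt (hpq : p ≤ q) (hD : ∀ x k, D x k = σ k * x k)
    (hσ : ∀ k, 0 < σ k) (hσa : Antitone σ) {n : ℕ} (hn : 1 ≤ n) {t : ℝ} (h : σ 0 < 12 * t) :
    entropyNumber n (D '' closedBall 0 1) ≤ 36 * t := by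
  refine entropyNumber_image_le D _ (fun _ => ()) {()} (by simpa using hn) (by simp)
    (by linarith [hσ 0]) fun x hx x' hx' _ => ?_
  rw [mem_closedBall_zero_iff] at hx hx'
  calc dist (D x) (D x') ≤ 0 * (0 : ℕ) ^ (1 / q).toReal + 2 * σ 0 :=
        dist_diagonal_le hpq hD hσ hσa hx hx' 0 le_rfl (by simp)
    _ ≤ 36 * t := by linarith [hσ 0]

theorem entropyNumber_diagonal_le_of_le_of_lt (hpq : p ≤ q) (hp : 1 ≤ p.toReal) {r : ℝ}
    (hr : (1 / p).toReal = (1 / q).toReal + r) (hD : ∀ x k, D x k = σ k * x k)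
    (hσ : ∀ k, 0 < σ k) (hσa : Antitone σ) {n : ℕ} (hn : 1 ≤ n) {t : ℝ} (ht : 0 < t) {k : ℕ}
    (hk : 12 * t ≤ σ k) (hk1 : σ (k + 1) < 12 * t) (hprof : entropyProfile σ r n k ≤ t) :
    entropyNumber n (D '' closedBall 0 1) ≤ 36 * t := by
  have hd : (0 : ℝ) < (k + 1 : ℕ) := by positivity
  set ε : ℝ := 12 * t / ((k + 1 : ℕ) : ℝ) ^ (1 / q).toReal
  have hε : 0 < ε := by positivity
  have hεq : ε * ((k + 1 : ℕ) : ℝ) ^ (1 / q).toReal = 12 * t := div_mul_cancel₀ _ (by positivity)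
  have hεp : ε / 2 * ((k + 1 : ℕ) : ℝ) ^ (1 / p.toReal) = 6 * t * (k + 1 : ℝ) ^ r := by
    rw [show 1 / p.toReal = (1 / p).toReal by rw [ENNReal.toReal_div, ENNReal.toReal_one], hr,
      rpow_add hd, ← mul_assoc, div_mul_eq_mul_div, hεq]
    push_cast
    ring
  let κ (x : lp (fun _ : ℕ => ℝ) p) (i : Fin (k + 1)) : ℤ := round (σ i * x i / ε)
  let b (i : Fin (k + 1)) : ℝ := ε / 2 * ((k + 1 : ℕ) : ℝ) ^ (1 / p.toReal) / σ i
  let K : ℤ := ⌈2 * σ 0 / ε⌉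
  let s := (Fintype.piFinset fun _ : Fin (k + 1) => Icc (-K) K).filter
    fun m => ∑ i, |(m i : ℝ)| * b i ≤ (k + 1 : ℕ)
  refine entropyNumber_image_le D _ κ s ?_ ?_ (by positivity) ?_
  · have hcard := card_le_prod_of_sum_abs_mul_le (b := b) (fun i => by have := hσ i; positivity)
      s fun m hm => by simpa using (mem_filter.1 hm).2
    simp only [b, hεp, one_div_div] at hcard
    exact_mod_cast hcard.trans (prod_two_mul_exp_one_le hσ hn ht hk hprof)
  · intro x hx
    rw [mem_closedBall_zero_iff] at hx
    exact mem_filter.2 ⟨Fintype.mem_piFinset.2 fun i =>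
      mem_Icc.2 (abs_le.1 (abs_round_le_ceil hσ hσa hx hε i)), sum_abs_round_mul_le hp hσ hx hε _⟩
  · rintro x hx x' hx' hxx'
    rw [mem_closedBall_zero_iff] at hx hx'
    calc dist (D x) (D x') ≤ ε * ((k + 1 : ℕ) : ℝ) ^ (1 / q).toReal + 2 * σ (k + 1) :=
          dist_diagonal_le hpq hD hσ hσa hx hx' (k + 1) hε.le fun i hi => ?_
      _ ≤ 36 * t := by rw [hεq]; linarith
    have h := abs_sub_le_one_of_round_eq (congrFun hxx' ⟨i, hi⟩)
    rwa [← sub_div, abs_div, abs_of_pos hε, div_le_one hε] at h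

end DiagonalOperator

/-- Here `σ k` is the paper's `σ_{k+1}`. -/
theorem statement0 (p q s : ℝ≥0∞) [Fact (1 ≤ p)] [Fact (1 ≤ q)]
    (hpq : p < q) (hs : 1 / p = 1 / q + 1 / s)
    (σ : ℕ → ℝ) (hσpos : ∀ k, 0 < σ k) (hσanti : Antitone σ)
    (hσlim : Tendsto σ atTop (nhds 0))
    (D : lp (fun _ : ℕ => ℝ) p →L[ℝ] lp (fun _ : ℕ => ℝ) q)
    (hD : ∀ (x : lp (fun _ : ℕ => ℝ) p) (k : ℕ), D x k = σ k * x k) :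
    ∃ C : ℝ, 0 < C ∧ ∀ n : ℕ, 1 ≤ n →
      entropyNumber n (D '' Metric.closedBall 0 1) ≤
        C * ⨆ k : ℕ,
          (k + 1 : ℝ) ^ (-(1 / s).toReal) *
            ((∏ i ∈ Finset.range (k + 1),
                (σ i + (k + 1 : ℝ) ^ (1 / s).toReal * σ k)) / n) ^ (1 / (k + 1 : ℝ)) := by
  have hp1 : (1 : ℝ≥0∞) ≤ p := Fact.out
  have hp : 1 ≤ p.toReal := by simpa using ENNReal.toReal_mono hpq.ne_top hp1
  have hinv_s : 1 / s ≠ ∞ := fun h => by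
    have : 1 / p ≤ 1 := by simpa using ENNReal.inv_le_one.2 hp1
    simp [hs, h] at this
  have hinv_q : 1 / q ≠ ∞ := by simpa using (zero_lt_one.trans_le (Fact.out : (1 : ℝ≥0∞) ≤ q)).ne'
  have hr : (1 / p).toReal = (1 / q).toReal + (1 / s).toReal := by
    rw [hs, ENNReal.toReal_add hinv_q hinv_s]
  refine ⟨36, by norm_num, fun n hn => ?_⟩
  change _ ≤ 36 * ⨆ k, entropyProfile σ (1 / s).toReal n k
  set t := ⨆ k, entropyProfile σ (1 / s).toReal n k
  have hprof (k : ℕ) : entropyProfile σ (1 / s).toReal n k ≤ t :=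
    le_ciSup ⟨2 * σ 0, Set.forall_mem_range.2
      (entropyProfile_le hσpos hσanti ENNReal.toReal_nonneg hn)⟩ k
  have ht : 0 < t := (entropyProfile_pos hσpos hn 0).trans_le (hprof 0)
  have hex : ∃ j, σ j < 12 * t := (hσlim.eventually (gt_mem_nhds (by positivity))).exists
  rcases hd : Nat.find hex with _ | k
  · exact entropyNumber_diagonal_le_of_lt hpq.le hD hσpos hσanti hn (hd ▸ Nat.find_spec hex)
  · exact entropyNumber_diagonal_le_of_le_of_lt hpq.le hp hr hD hσpos hσanti hn ht
      (not_lt.1 (Nat.find_min hex (hd ▸ k.lt_succ_self))) (hd ▸ Nat.find_spec hex) (hprof k)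
end

section
/- Let 1 ≤ p, q ≤ ∞, k ≥ 1 and σ_1, …, σ_k > 0. Then for all ε > 0 the diagonal operator D_σ : ℓ_p^k → ℓ_q^k satisfies N(2ε, D_σ) ≤ 2^k · ( λ^k(B_{ℓ_p^k}) / λ^k(B_{ℓ_q^k}) ) · ∏_{i=1}^k ( ‖id : ℓ_q^k → ℓ_p^k‖ + σ_i/ε ), where ‖id : ℓ_q^k → ℓ_p^k‖ denotes the operator norm of the identity map from ℓ_q^k to ℓ_p^k and λ^k denotes the k-dimensional Lebesgue measure. -/
open Metric MeasureTheory
open scoped ENNReal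

/-- The covering number of a set `T` at scale `ε`: the least number `m ≥ 1` of closed
balls of radius `ε` needed to cover `T` (`∞` if no finite cover exists). -/
noncomputable def coveringNumber {Y : Type*} [SeminormedAddCommGroup Y]
    (ε : ℝ) (T : Set Y) : ℝ≥0∞ :=
  sInf {c : ℝ≥0∞ | ∃ m : ℕ, c = m ∧ 1 ≤ m ∧
    ∃ y : Fin m → Y, T ⊆ ⋃ i, Metric.closedBall (y i) ε}

/-- The `k`-dimensional Lebesgue volume of the closed unit ball of `ℓ_p^k = PiLp p ℝ^k`
(computed in the underlying space `Fin k → ℝ`). -/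
noncomputable def ballVolume (p : ℝ≥0∞) [Fact (1 ≤ p)] (k : ℕ) : ℝ≥0∞ :=
  volume ((WithLp.equiv p (∀ _ : Fin k, ℝ)) ''
    Metric.closedBall (0 : PiLp p (fun _ : Fin k => ℝ)) 1)

/-!
Let `y_1, …, y_N` be a maximal `2ε`-separated family in `D_σ(B_{ℓ_p})`; it is a `2ε`-net, and the
`ℓ_q`-balls of radius `ε` around the `y_j` are disjoint. Each of them lies in `D_c(B_{ℓ_p})` with
`c_i = 2ε(‖id‖ + σ_i/ε)`: a point `σx + u` with `‖x‖_p ≤ 1` and `‖u‖_q ≤ ε` is the `D_c`-image of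
`w = (σx + u)/c`, and `‖w‖_p ≤ (‖x‖_p + ‖u‖_p/(ε‖id‖))/2 ≤ 1`. Comparing volumes,
`N ε^k λ(B_{ℓ_q}) ≤ ∏ c_i · λ(B_{ℓ_p})`.
-/

open scoped NNReal

namespace PiLp

variable {ι : Type*} [Fintype ι] {β : ι → Type*} [∀ i, SeminormedAddCommGroup (β i)]
  (p : ℝ≥0∞) [Fact (1 ≤ p)]

theorem norm_le_norm_of_forall_norm_le {u v : PiLp p β} (h : ∀ i, ‖u i‖ ≤ ‖v i‖) :
    ‖u‖ ≤ ‖v‖ := by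
  rcases p.dichotomy with rfl | hp
  · rw [norm_eq_ciSup, norm_eq_ciSup]
    exact ciSup_mono (Set.finite_range _).bddAbove h
  · have hp0 : 0 < p.toReal := zero_lt_one.trans_le hp
    rw [norm_eq_sum hp0, norm_eq_sum hp0]
    gcongr with i
    exact h i

end PiLp

section Diagonal

variable {ι : Type*} [Fintype ι]

/-- `D_d(B_{ℓ_p})` for the diagonal operator `D_d : ℓ_p → ℓ_q`. -/
def diagImageBall (p q : ℝ≥0∞) [Fact (1 ≤ p)] (d : ι → ℝ) : Set (PiLp q fun _ : ι => ℝ) :=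
  {z | ∃ w : PiLp p (fun _ : ι => ℝ), ‖w‖ ≤ 1 ∧ ∀ i, z i = d i * w i}

theorem exists_norm_le_one_and_mul_add_eq (p : ℝ≥0∞) [Fact (1 ≤ p)] {σ : ι → ℝ}
    (hσ : ∀ i, 0 ≤ σ i) {δ : ℝ} (hδ : 0 < δ) {x u : PiLp p fun _ : ι => ℝ} (hx : ‖x‖ ≤ 1)
    (hu : ‖u‖ ≤ δ) :
    ∃ w : PiLp p (fun _ : ι => ℝ), ‖w‖ ≤ 1 ∧ ∀ i, σ i * x i + u i = 2 * (σ i + δ) * w i := by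
  have hpos (i : ι) : 0 < σ i + δ := by linarith [hσ i]
  let a : PiLp p (fun _ : ι => ℝ) := WithLp.toLp p fun i => σ i * x i / (σ i + δ)
  let b : PiLp p (fun _ : ι => ℝ) := WithLp.toLp p fun i => u i / (σ i + δ)
  have ha : ‖a‖ ≤ ‖x‖ := PiLp.norm_le_norm_of_forall_norm_le p fun i => by
    simp only [a, Real.norm_eq_abs, abs_div, abs_mul, abs_of_nonneg (hσ i),
      abs_of_pos (hpos i)]
    rw [div_le_iff₀ (hpos i)]
    nlinarith [abs_nonneg (x i), hσ i]
  have hb : ‖b‖ ≤ ‖δ⁻¹ • u‖ := PiLp.norm_le_norm_of_forall_norm_le p fun i => by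
    simp only [b, PiLp.smul_apply, smul_eq_mul, Real.norm_eq_abs, abs_div,
      abs_mul, abs_of_pos (hpos i), abs_inv, abs_of_pos hδ]
    rw [div_le_iff₀ (hpos i)]
    calc |u i| = δ⁻¹ * |u i| * δ := by field_simp
      _ ≤ δ⁻¹ * |u i| * (σ i + δ) := by gcongr; linarith [hσ i]
  refine ⟨(1 / 2 : ℝ) • (a + b), ?_, fun i => ?_⟩
  · have hb' : ‖b‖ ≤ 1 := by
      rw [norm_smul, Real.norm_of_nonneg (inv_nonneg.2 hδ.le)] at hb
      exact hb.trans ((inv_mul_le_one₀ hδ).2 hu)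
    rw [norm_smul, Real.norm_of_nonneg (by norm_num)]
    linarith [norm_add_le a b]
  · simp only [a, b, PiLp.smul_apply, PiLp.add_apply, smul_eq_mul]
    field_simp [(hpos i).ne']

theorem ContinuousLinearMap.norm_pos_of_forall_apply_eq [Nonempty ι] {p q : ℝ≥0∞}
    [Fact (1 ≤ p)] [Fact (1 ≤ q)] (I : PiLp q (fun _ : ι => ℝ) →L[ℝ] PiLp p fun _ : ι => ℝ)
    (hI : ∀ x i, I x i = x i) : 0 < ‖I‖ := by
  classical
  inhabit ι
  refine norm_pos_iff.2 fun h => ?_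
  simpa [h] using hI (PiLp.single q default 1) default

theorem closedBall_subset_diagImageBall {p q : ℝ≥0∞} [Fact (1 ≤ p)] [Fact (1 ≤ q)]
    (I : PiLp q (fun _ : ι => ℝ) →L[ℝ] PiLp p fun _ : ι => ℝ)
    (hI : ∀ x i, I x i = x i) (hI_pos : 0 < ‖I‖) {σ : ι → ℝ} (hσ : ∀ i, 0 ≤ σ i) {ε : ℝ}
    (hε : 0 < ε) {y : PiLp q fun _ : ι => ℝ} (hy : y ∈ diagImageBall p q σ) :
    closedBall y ε ⊆ diagImageBall p q fun i => 2 * ε * (‖I‖ + σ i / ε) := by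
  intro z hz
  obtain ⟨x, hx, hyx⟩ := hy
  have hu : ‖I (z - y)‖ ≤ ε * ‖I‖ := by
    rw [mul_comm]
    exact (I.le_opNorm _).trans (by gcongr; exact mem_closedBall_iff_norm.1 hz)
  obtain ⟨w, hw, hxw⟩ := exists_norm_le_one_and_mul_add_eq p hσ (by positivity) hx hu
  refine ⟨w, hw, fun i => ?_⟩
  have hzi : z i = σ i * x i + I (z - y) i := by rw [hI, ← hyx i, PiLp.sub_apply]; ring
  rw [hzi, hxw i]
  field_simp
  ring

end Diagonal

section Volume

variable (p q : ℝ≥0∞) (k : ℕ)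

noncomputable def lpVolume : Measure (PiLp p fun _ : Fin k => ℝ) :=
  volume.map (MeasurableEquiv.toLp p (Fin k → ℝ))

instance [Fact (1 ≤ p)] : (lpVolume p k).IsAddHaarMeasure :=
  (PiLp.continuousLinearEquiv p ℝ fun _ : Fin k => ℝ).symm.isAddHaarMeasure_map volume

theorem lpVolume_apply (s : Set (PiLp p fun _ : Fin k => ℝ)) :
    lpVolume p k s = volume (WithLp.ofLp '' s) := by
  rw [lpVolume, MeasurableEquiv.map_apply, ← MeasurableEquiv.image_symm]
  rfl

variable [Fact (1 ≤ p)]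

theorem ballVolume_eq_lpVolume : ballVolume p k = lpVolume p k (closedBall 0 1) := by
  rw [lpVolume_apply]; rfl

theorem lpVolume_closedBall (x : PiLp p fun _ : Fin k => ℝ) {r : ℝ} (hr : 0 ≤ r) :
    lpVolume p k (closedBall x r) = ENNReal.ofReal (r ^ k) * ballVolume p k := by
  rw [Measure.addHaar_closedBall' _ x hr, ballVolume_eq_lpVolume,
    (WithLp.linearEquiv p ℝ (Fin k → ℝ)).finrank_eq, Module.finrank_fin_fun]

theorem ballVolume_pos : 0 < ballVolume p k := by
  rw [ballVolume_eq_lpVolume]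
  exact measure_closedBall_pos _ _ one_pos

theorem ballVolume_ne_top : ballVolume p k ≠ ∞ := by
  rw [ballVolume_eq_lpVolume]
  exact measure_closedBall_lt_top.ne

theorem lpVolume_diagImageBall [Fact (1 ≤ q)] (d : Fin k → ℝ) :
    lpVolume q k (diagImageBall p q d) = ENNReal.ofReal |∏ i, d i| * ballVolume p k := by
  have himage : WithLp.ofLp '' diagImageBall p q d =
      Matrix.toLin' (Matrix.diagonal d) '' (WithLp.ofLp '' closedBall (0 : PiLp p _) 1) := by
    ext v
    simp only [diagImageBall, Set.mem_image, mem_closedBall_zero_iff]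
    constructor
    · rintro ⟨z, ⟨w, hw, hz⟩, rfl⟩
      exact ⟨_, ⟨w, hw, rfl⟩, funext fun i => by simp [Matrix.mulVec_diagonal, hz]⟩
    · rintro ⟨_, ⟨w, hw, rfl⟩, rfl⟩
      exact ⟨WithLp.toLp q _, ⟨w, hw, fun i => by simp [Matrix.mulVec_diagonal]⟩, rfl⟩
  rw [lpVolume_apply, himage, Measure.addHaar_image_linearMap, LinearMap.det_toLin',
    Matrix.det_diagonal]
  rfl

end Volume

theorem packingNumber_two_mul_mul_le {X : Type*} [PseudoMetricSpace X] [MeasurableSpace X]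
    [OpensMeasurableSpace X] (μ : Measure X) {S K : Set X} {r : ℝ≥0} {a : ℝ≥0∞}
    (ha : ∀ x ∈ S, a ≤ μ (closedBall x r)) (hK : ∀ x ∈ S, closedBall x r ⊆ K) :
    (packingNumber (2 * r) S : ℝ≥0∞) * a ≤ μ K := by
  simp only [packingNumber, ENat.toENNReal_iSup, ENNReal.iSup_mul, iSup_le_iff]
  intro C hCS hC
  have hdisj : Pairwise (Function.onFun Disjoint fun c : C => closedBall (c : X) r) :=
    fun c c' hcc' => closedBall_disjoint_closedBall <| by
      have hsep : ((2 * r : ℝ≥0) : ℝ≥0∞) < edist (c : X) c' :=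
        hC c.2 c'.2 (Subtype.coe_injective.ne hcc')
      rw [edist_nndist, ENNReal.coe_lt_coe, ← NNReal.coe_lt_coe, coe_nndist] at hsep
      push_cast at hsep
      linarith
  calc (C.encard : ℝ≥0∞) * a = ∑' _ : C, a := (ENNReal.tsum_set_const C a).symm
    _ ≤ ∑' c : C, μ (closedBall (c : X) r) := ENNReal.tsum_le_tsum fun c => ha c (hCS c.2)
    _ ≤ μ (⋃ c : C, closedBall (c : X) r) :=
      tsum_meas_le_meas_iUnion_of_disjoint μ (fun _ => measurableSet_closedBall) hdisj
    _ ≤ μ K := measure_mono <| Set.iUnion_subset fun c => hK c (hCS c.2)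

theorem coveringNumber_le_metric_coveringNumber {Y : Type*} [SeminormedAddCommGroup Y]
    {S : Set Y} (hS : S.Nonempty) (δ : ℝ≥0) :
    _root_.coveringNumber δ S ≤ Metric.coveringNumber δ S := by
  by_cases htop : Metric.coveringNumber δ S = ⊤
  · simp [htop]
  obtain ⟨C, -, hCfin, hcover, hcard⟩ := exists_set_encard_eq_coveringNumber htop
  obtain ⟨F, rfl⟩ := hCfin.exists_finset_coe
  rw [← hcard, Set.encard_coe_eq_coe_finsetCard]
  refine sInf_le ⟨F.card, rfl, ?_, fun i => F.equivFin.symm i, fun x hx => ?_⟩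
  · exact Finset.card_pos.2 (Finset.coe_nonempty.1 (hcover.nonempty hS))
  · obtain ⟨c, hc, hxc⟩ := Set.mem_iUnion₂.1 (hcover.subset_iUnion_closedBall hx)
    exact Set.mem_iUnion.2 ⟨F.equivFin ⟨c, hc⟩, by simpa using hxc⟩

theorem coveringNumber_two_mul_mul_le {Y : Type*} [SeminormedAddCommGroup Y] [MeasurableSpace Y]
    [OpensMeasurableSpace Y] (μ : Measure Y) {S K : Set Y} (hS : S.Nonempty) {r : ℝ≥0}
    {a : ℝ≥0∞} (ha : ∀ x ∈ S, a ≤ μ (closedBall x r)) (hK : ∀ x ∈ S, closedBall x r ⊆ K) :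
    _root_.coveringNumber (2 * r) S * a ≤ μ K := by
  calc _root_.coveringNumber (2 * r) S * a
      = _root_.coveringNumber ((2 * r : ℝ≥0) : ℝ) S * a := by push_cast; rfl
    _ ≤ (Metric.coveringNumber (2 * r) S : ℝ≥0∞) * a := by
        gcongr; exact coveringNumber_le_metric_coveringNumber hS _
    _ ≤ (packingNumber (2 * r) S : ℝ≥0∞) * a := by
        gcongr; exact coveringNumber_le_packingNumber _ S
    _ ≤ μ K := packingNumber_two_mul_mul_le μ ha hK

/-- **Lemma 2.2 (volume argument).**
Let `1 ≤ p, q ≤ ∞`, `k ≥ 1` and `σ_1, …, σ_k > 0`.  Then for all `ε > 0` the diagonal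
operator `D_σ : ℓ_p^k → ℓ_q^k` satisfies
`N(2ε, D_σ) ≤ 2^k (λ^k(B_{ℓ_p^k}) / λ^k(B_{ℓ_q^k})) ∏_{i=1}^k (‖id : ℓ_q^k → ℓ_p^k‖ + σ_i/ε)`,
where the image of the unit ball under `D_σ` is described explicitly as a set and the
identity map `id : ℓ_q^k → ℓ_p^k` is given as a continuous linear map `I`. -/
theorem statement6 (p q : ℝ≥0∞) [Fact (1 ≤ p)] [Fact (1 ≤ q)]
    (k : ℕ) (hk : 1 ≤ k) (σ : Fin k → ℝ) (hσ : ∀ i, 0 < σ i)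
    (I : PiLp q (fun _ : Fin k => ℝ) →L[ℝ] PiLp p (fun _ : Fin k => ℝ))
    (hI : ∀ (x : PiLp q (fun _ : Fin k => ℝ)) (i : Fin k), I x i = x i)
    (ε : ℝ) (hε : 0 < ε) :
    coveringNumber (2 * ε)
        {y : PiLp q (fun _ : Fin k => ℝ) |
          ∃ x : PiLp p (fun _ : Fin k => ℝ), ‖x‖ ≤ 1 ∧ ∀ i, y i = σ i * x i} ≤
      2 ^ k * (ballVolume p k / ballVolume q k) *
        ENNReal.ofReal (∏ i : Fin k, (‖I‖ + σ i / ε)) := by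
  have : Nonempty (Fin k) := ⟨⟨0, hk⟩⟩
  have hI_pos := ContinuousLinearMap.norm_pos_of_forall_apply_eq I hI
  have hS : (diagImageBall p q σ).Nonempty := ⟨0, 0, by simp, by simp⟩
  have hP : 0 < ∏ i, (‖I‖ + σ i / ε) := Finset.prod_pos fun i _ => by have := hσ i; positivity
  lift ε to ℝ≥0 using hε.le
  have hcover := coveringNumber_two_mul_mul_le (lpVolume q k) hS
    (fun y _ => (lpVolume_closedBall q k y ε.2).ge)
    (fun y hy => closedBall_subset_diagImageBall I hI hI_pos (fun i => (hσ i).le) hε hy)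
  rw [lpVolume_diagImageBall, Finset.prod_mul_distrib, Finset.prod_const, Finset.card_univ,
    Fintype.card_fin, abs_of_pos (mul_pos (by positivity) hP), ENNReal.ofReal_mul (by positivity),
    mul_pow, ENNReal.ofReal_mul (by positivity), ENNReal.ofReal_pow zero_le_two,
    ENNReal.ofReal_ofNat] at hcover
  have hVq_pos := ballVolume_pos q k
  have hVq_top := ballVolume_ne_top q k
  rw [← ENNReal.mul_le_mul_iff_left (c := ENNReal.ofReal (ε ^ k) * ballVolume q k)
    (mul_ne_zero (ENNReal.ofReal_pos.2 (by positivity)).ne' hVq_pos.ne')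
    (ENNReal.mul_ne_top ENNReal.ofReal_ne_top hVq_top)]
  refine hcover.trans_eq ?_
  conv_lhs => rw [← ENNReal.div_mul_cancel hVq_pos.ne' hVq_top (b := ballVolume p k)]
  ring
end

section
/- Let s > 0 and let σ = (σ_k)_{k≥1} be a non-increasing sequence of positive real numbers with σ_k → 0, and define the partial sum sequence v_n = (∑_{k=1}^n σ_k^{-s})^{1/s}. Then the following are equivalent: (i) there exists a real number b > 1 such that sup{ σ_n b^n / (σ_k b^k) : k ≤ n } < ∞; (ii) there exist constants c₁, c₂ > 0 such that c₁/v_n ≤ σ_n ≤ c₂/v_n for all n ≥ 1. -/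
/-!
Write `a k = σ k ^ (-s)` and `T n = ∑_{k ≤ n} a k = v n ^ s`. Condition (ii) says exactly that
`T n ≤ A * a n`, i.e. every new term is a fixed fraction of the partial sum; then
`T (n + 1) ≥ A / (A - 1) * T n`, so `T` and hence `a` grow geometrically. Conversely, if `a` grows
geometrically up to a constant, `T n` is dominated by a geometric series ending at `a n`.
Finally (EXP) is geometric growth of `σ⁻¹`, which is equivalent to geometric growth of its
power `a = (σ⁻¹) ^ s`.
-/

open Filter Finset

def HasGeometricGrowth (u : ℕ → ℝ) : Prop :=
  ∃ q > 1, ∃ D, ∀ k n, 1 ≤ k → k ≤ n → u k * q ^ (n - k) ≤ D * u n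

section GeometricGrowth

variable {u w : ℕ → ℝ}

lemma hasGeometricGrowth_congr (h : ∀ k, 1 ≤ k → u k = w k) :
    HasGeometricGrowth u ↔ HasGeometricGrowth w := by
  refine exists_congr fun q => and_congr_right fun _ => exists_congr fun D => ?_
  refine forall₂_congr fun k n => imp_congr_right fun hk => imp_congr_right fun hkn => ?_
  rw [h k hk, h n (hk.trans hkn)]

lemma HasGeometricGrowth.rpow {t : ℝ} (ht : 0 < t) (hu : ∀ k, 1 ≤ k → 0 < u k)
    (h : HasGeometricGrowth u) : HasGeometricGrowth fun k => u k ^ t := by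
  obtain ⟨q, hq, D, hD⟩ := h
  refine ⟨q ^ t, Real.one_lt_rpow hq ht, D ^ t, fun k n hk hkn => ?_⟩
  have hq0 : 0 ≤ q ^ (n - k) := pow_nonneg (by linarith) _
  have hD0 : 0 ≤ D := by
    refine nonneg_of_mul_nonneg_left ?_ (hu n (hk.trans hkn))
    exact (mul_nonneg (hu k hk).le hq0).trans (hD k n hk hkn)
  calc u k ^ t * (q ^ t) ^ (n - k) = (u k * q ^ (n - k)) ^ t := by
        rw [Real.mul_rpow (hu k hk).le hq0, Real.rpow_pow_comm (by linarith)]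
    _ ≤ (D * u n) ^ t := Real.rpow_le_rpow (mul_nonneg (hu k hk).le hq0) (hD k n hk hkn) ht.le
    _ = D ^ t * u n ^ t := Real.mul_rpow hD0 (hu n (hk.trans hkn)).le

lemma hasGeometricGrowth_rpow_iff {t : ℝ} (ht : 0 < t) (hu : ∀ k, 1 ≤ k → 0 < u k) :
    (HasGeometricGrowth fun k => u k ^ t) ↔ HasGeometricGrowth u := by
  refine ⟨fun h => ?_, HasGeometricGrowth.rpow ht hu⟩
  refine (hasGeometricGrowth_congr fun k hk => ?_).mp (h.rpow (inv_pos.mpr ht) ?_)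
  · exact Real.rpow_rpow_inv (hu k hk).le ht.ne'
  · exact fun k hk => Real.rpow_pos_of_pos (hu k hk) t

lemma sum_Icc_pow_sub_le {r : ℝ} (hr0 : 0 ≤ r) (hr1 : r < 1) (n : ℕ) :
    ∑ k ∈ Icc 1 n, r ^ (n - k) ≤ (1 - r)⁻¹ := by
  rw [← Ico_add_one_right_eq_Icc, sum_Ico_reflect (r ^ ·) 1 le_rfl, Nat.sub_self]
  simpa using geom_sum_Ico_le_of_lt_one (m := 0) hr0 hr1

lemma HasGeometricGrowth.exists_sum_Icc_le (h : HasGeometricGrowth u)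
    (hu : ∀ k, 1 ≤ k → 0 < u k) : ∃ A, ∀ n, 1 ≤ n → ∑ k ∈ Icc 1 n, u k ≤ A * u n := by
  obtain ⟨q, hq, D, hD⟩ := h
  have hr0 : 0 ≤ q⁻¹ := inv_nonneg.mpr (by linarith)
  have hr1 : q⁻¹ < 1 := inv_lt_one_of_one_lt₀ hq
  refine ⟨D * (1 - q⁻¹)⁻¹, fun n hn => ?_⟩
  have hterm : ∀ k ∈ Icc 1 n, u k ≤ D * u n * q⁻¹ ^ (n - k) := fun k hk => by
    obtain ⟨hk, hkn⟩ := mem_Icc.mp hk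
    rw [inv_pow, ← div_eq_mul_inv, le_div_iff₀ (pow_pos (by linarith) _)]
    exact hD k n hk hkn
  have hDu : 0 ≤ D * u n := (hu n hn).le.trans (by simpa using hterm n (right_mem_Icc.mpr hn))
  calc ∑ k ∈ Icc 1 n, u k ≤ ∑ k ∈ Icc 1 n, D * u n * q⁻¹ ^ (n - k) := sum_le_sum hterm
    _ = D * u n * ∑ k ∈ Icc 1 n, q⁻¹ ^ (n - k) := (mul_sum ..).symm
    _ ≤ D * u n * (1 - q⁻¹)⁻¹ := mul_le_mul_of_nonneg_left (sum_Icc_pow_sub_le hr0 hr1 n) hDu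
    _ = D * (1 - q⁻¹)⁻¹ * u n := by ring

lemma div_sub_one_mul_sum_Icc_le_sum_Icc_succ {A : ℝ} (hA : 1 < A) (m : ℕ)
    (h : ∑ k ∈ Icc 1 (m + 1), u k ≤ A * u (m + 1)) :
    A / (A - 1) * ∑ k ∈ Icc 1 m, u k ≤ ∑ k ∈ Icc 1 (m + 1), u k := by
  rw [sum_Icc_succ_top (Nat.le_add_left 1 m)] at h ⊢
  rw [div_mul_eq_mul_div, div_le_iff₀ (by linarith)]
  linarith

lemma hasGeometricGrowth_of_sum_Icc_le {A : ℝ} (hu : ∀ k, 1 ≤ k → 0 < u k)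
    (hA : ∀ n, 1 ≤ n → ∑ k ∈ Icc 1 n, u k ≤ A * u n) : HasGeometricGrowth u := by
  set A' := max A 2
  have hA' : 1 < A' := lt_of_lt_of_le one_lt_two (le_max_right _ _)
  have hA'u : ∀ n, 1 ≤ n → ∑ k ∈ Icc 1 n, u k ≤ A' * u n := fun n hn =>
    (hA n hn).trans (mul_le_mul_of_nonneg_right (le_max_left _ _) (hu n hn).le)
  have hq : 1 < A' / (A' - 1) := (one_lt_div (by linarith)).mpr (by linarith)
  refine ⟨A' / (A' - 1), hq, A', fun k n hk hkn => ?_⟩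
  have hgrowth : (A' / (A' - 1)) ^ (n - k) * ∑ j ∈ Icc 1 k, u j ≤ ∑ j ∈ Icc 1 n, u j := by
    have := geom_le (u := fun i => ∑ j ∈ Icc 1 (k + i), u j) (by positivity) (n - k)
      fun i _ => div_sub_one_mul_sum_Icc_le_sum_Icc_succ hA' (k + i) (hA'u _ (by omega))
    simpa [Nat.add_sub_cancel' hkn] using this
  have hsingle : u k ≤ ∑ j ∈ Icc 1 k, u j :=
    single_le_sum (fun j hj => (hu j (mem_Icc.mp hj).1).le) (right_mem_Icc.mpr hk)
  calc u k * (A' / (A' - 1)) ^ (n - k)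
      ≤ (A' / (A' - 1)) ^ (n - k) * ∑ j ∈ Icc 1 k, u j := by
        rw [mul_comm]; exact mul_le_mul_of_nonneg_left hsingle (by positivity)
    _ ≤ A' * u n := hgrowth.trans (hA'u n (hk.trans hkn))

lemma hasGeometricGrowth_iff_exists_sum_Icc_le (hu : ∀ k, 1 ≤ k → 0 < u k) :
    HasGeometricGrowth u ↔ ∃ A, ∀ n, 1 ≤ n → ∑ k ∈ Icc 1 n, u k ≤ A * u n :=
  ⟨fun h => h.exists_sum_Icc_le hu, fun ⟨_, hA⟩ => hasGeometricGrowth_of_sum_Icc_le hu hA⟩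

end GeometricGrowth

lemma hasGeometricGrowth_inv_iff {σ : ℕ → ℝ} (hσ : ∀ k, 1 ≤ k → 0 < σ k) :
    (HasGeometricGrowth fun k => (σ k)⁻¹) ↔ ∃ b : ℝ, 1 < b ∧ ∃ C : ℝ, ∀ k n : ℕ, 1 ≤ k → k ≤ n →
      σ n * b ^ n / (σ k * b ^ k) ≤ C := by
  refine exists_congr fun b => and_congr_right fun hb => exists_congr fun C => ?_
  refine forall₂_congr fun k n => imp_congr_right fun hk => imp_congr_right fun hkn => ?_
  have hb0 : 0 < b := zero_lt_one.trans hb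
  have hσk := hσ k hk
  rw [← pow_sub_mul_pow b hkn, div_le_iff₀ (by positivity), inv_mul_eq_div, ← div_eq_mul_inv,
    div_le_div_iff₀ hσk (hσ n (hk.trans hkn)), ← mul_assoc, ← mul_assoc,
    mul_le_mul_iff_of_pos_right (pow_pos hb0 k), mul_comm (σ n)]

lemma two_sided_bound_iff_exists_sum_Icc_le {s : ℝ} (hs : 0 < s) {σ v : ℕ → ℝ}
    (hσ : ∀ k, 1 ≤ k → 0 < σ k)
    (hv : ∀ n, v n = (∑ k ∈ Icc 1 n, σ k ^ (-s)) ^ (1 / s)) :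
    (∃ c₁ c₂ : ℝ, 0 < c₁ ∧ 0 < c₂ ∧ ∀ n : ℕ, 1 ≤ n → c₁ / v n ≤ σ n ∧ σ n ≤ c₂ / v n) ↔
      ∃ A, ∀ n, 1 ≤ n → ∑ k ∈ Icc 1 n, σ k ^ (-s) ≤ A * σ n ^ (-s) := by
  have hsingle : ∀ n, 1 ≤ n → σ n ^ (-s) ≤ ∑ k ∈ Icc 1 n, σ k ^ (-s) := fun n hn =>
    single_le_sum (fun k hk => (Real.rpow_pos_of_pos (hσ k (mem_Icc.mp hk).1) _).le)
      (right_mem_Icc.mpr hn)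
  have hvpos : ∀ n, 1 ≤ n → 0 < v n := fun n hn => by
    rw [hv]; exact Real.rpow_pos_of_pos ((Real.rpow_pos_of_pos (hσ n hn) _).trans_le
      (hsingle n hn)) _
  have hpow : ∀ n, 1 ≤ n → (σ n * v n) ^ s = σ n ^ s * ∑ k ∈ Icc 1 n, σ k ^ (-s) := fun n hn => by
    rw [Real.mul_rpow (hσ n hn).le (hvpos n hn).le, hv, one_div, Real.rpow_inv_rpow
      ((Real.rpow_pos_of_pos (hσ n hn) _).le.trans (hsingle n hn)) hs.ne']
  have hlower : ∀ n, 1 ≤ n → 1 ≤ σ n * v n := fun n hn => by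
    have hσs := Real.rpow_pos_of_pos (hσ n hn) s
    rw [← Real.rpow_le_rpow_iff zero_le_one (mul_pos (hσ n hn) (hvpos n hn)).le hs,
      Real.one_rpow, hpow n hn]
    calc 1 = σ n ^ s * σ n ^ (-s) := by rw [Real.rpow_neg (hσ n hn).le, mul_inv_cancel₀ hσs.ne']
      _ ≤ σ n ^ s * ∑ k ∈ Icc 1 n, σ k ^ (-s) := mul_le_mul_of_nonneg_left (hsingle n hn) hσs.le
  have hupper : ∀ n, 1 ≤ n → ∀ c, 0 ≤ c →
      (σ n * v n ≤ c ↔ ∑ k ∈ Icc 1 n, σ k ^ (-s) ≤ c ^ s * σ n ^ (-s)) := fun n hn c hc => by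
    rw [← Real.rpow_le_rpow_iff (mul_pos (hσ n hn) (hvpos n hn)).le hc hs, hpow n hn,
      Real.rpow_neg (hσ n hn).le, le_mul_inv_iff₀ (Real.rpow_pos_of_pos (hσ n hn) s), mul_comm]
  constructor
  · rintro ⟨c₁, c₂, -, hc₂, h⟩
    exact ⟨c₂ ^ s, fun n hn => (hupper n hn c₂ hc₂.le).mp ((le_div_iff₀ (hvpos n hn)).mp (h n hn).2)⟩
  · rintro ⟨A, hA⟩
    have hA1 : (0 : ℝ) ≤ max A 1 := zero_le_one.trans (le_max_right _ _)
    refine ⟨1, max A 1 ^ s⁻¹, one_pos, Real.rpow_pos_of_pos (by positivity) _, fun n hn => ?_⟩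
    rw [div_le_iff₀ (hvpos n hn), le_div_iff₀ (hvpos n hn), hupper n hn _ (by positivity),
      Real.rpow_inv_rpow hA1 hs.ne']
    exact ⟨hlower n hn, (hA n hn).trans (mul_le_mul_of_nonneg_right (le_max_left _ _)
      (Real.rpow_pos_of_pos (hσ n hn) _).le)⟩

theorem statement12_general (s : ℝ) (hs : 0 < s) (σ : ℕ → ℝ)
    (hpos : ∀ k, 1 ≤ k → 0 < σ k)
    (v : ℕ → ℝ)
    (hv : ∀ n : ℕ, v n = (∑ k ∈ Finset.Icc 1 n, σ k ^ (-s)) ^ (1 / s)) :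
    (∃ b : ℝ, 1 < b ∧ ∃ C : ℝ, ∀ k n : ℕ, 1 ≤ k → k ≤ n →
        σ n * b ^ n / (σ k * b ^ k) ≤ C) ↔
    (∃ c₁ c₂ : ℝ, 0 < c₁ ∧ 0 < c₂ ∧ ∀ n : ℕ, 1 ≤ n →
        c₁ / v n ≤ σ n ∧ σ n ≤ c₂ / v n) := by
  have hinv : ∀ k, 1 ≤ k → 0 < (σ k)⁻¹ := fun k hk => inv_pos.mpr (hpos k hk)
  have hrpow : ∀ k, 1 ≤ k → 0 < σ k ^ (-s) := fun k hk => Real.rpow_pos_of_pos (hpos k hk) _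
  have hinv_rpow : ∀ k, 1 ≤ k → (σ k)⁻¹ ^ s = σ k ^ (-s) := fun k hk => by
    rw [Real.inv_rpow (hpos k hk).le, Real.rpow_neg (hpos k hk).le]
  rw [← hasGeometricGrowth_inv_iff hpos, ← hasGeometricGrowth_rpow_iff hs hinv,
    hasGeometricGrowth_congr hinv_rpow, hasGeometricGrowth_iff_exists_sum_Icc_le hrpow,
    two_sided_bound_iff_exists_sum_Icc_le hs hpos hv]

/-- **Lemma (EXP sequences), (i) ⟺ (iii).**
For `s > 0` and a non-increasing positive sequence `σ` (indexed from 1) tending to zero,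
with partial sum sequence `v_n = (∑_{k=1}^n σ_k^{-s})^{1/s}`, the condition (EXP) is
equivalent to `σ_n ≍ 1 / v_n`. -/
theorem statement12 (s : ℝ) (hs : 0 < s) (σ : ℕ → ℝ)
    (hpos : ∀ k, 1 ≤ k → 0 < σ k)
    (hanti : ∀ m n : ℕ, 1 ≤ m → m ≤ n → σ n ≤ σ m)
    (hlim : Tendsto σ atTop (nhds 0))
    (v : ℕ → ℝ)
    (hv : ∀ n : ℕ, v n = (∑ k ∈ Finset.Icc 1 n, σ k ^ (-s)) ^ (1 / s)) :
    (∃ b : ℝ, 1 < b ∧ ∃ C : ℝ, ∀ k n : ℕ, 1 ≤ k → k ≤ n →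
        σ n * b ^ n / (σ k * b ^ k) ≤ C) ↔
    (∃ c₁ c₂ : ℝ, 0 < c₁ ∧ 0 < c₂ ∧ ∀ n : ℕ, 1 ≤ n →
        c₁ / v n ≤ σ n ∧ σ n ≤ c₂ / v n) :=
  statement12_general s hs σ hpos v hv
end

section
/- Let r > 0 and let σ = (σ_k)_{k≥1} be a non-increasing sequence of positive real numbers with σ_k → 0. Then the following are equivalent: (i) there exists a real number b > 1 such that sup{ σ_n b^n / (σ_k b^k) : k ≤ n } < ∞; (ii) ∑_{k≥1} σ_k^r < ∞ and there exist constants c₁, c₂ > 0 such that c₁ σ_n ≤ τ_n ≤ c₂ σ_n for all n ≥ 1, where τ_n = (∑_{k≥n} σ_k^r)^{1/r} is the tail sequence. -/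
open Filter

/-- The tail sequence `τ_n = (∑_{k ≥ n} σ_k^r)^{1/r}` of a sequence `σ` indexed from 1. -/
noncomputable def tailSeq (r : ℝ) (σ : ℕ → ℝ) (n : ℕ) : ℝ :=
  (∑' k : ℕ, if n ≤ k then σ k ^ r else 0) ^ (1 / r)

lemma tsum_shift_geom (n : ℕ) (A q : ℝ) (hq0 : 0 ≤ q) (hq1 : q < 1) :
    (∑' k : ℕ, if n ≤ k then A * q ^ (k - n) else 0) = A * (1 - q)⁻¹ := by
  have hinj : Function.Injective (fun j : ℕ => n + j) := fun a b h => by simpa using h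
  have hsupp : Function.support (fun k : ℕ => if n ≤ k then A * q ^ (k - n) else 0)
      ⊆ Set.range (fun j : ℕ => n + j) := by
    intro k hk
    by_cases h : n ≤ k
    · exact ⟨k - n, show n + (k - n) = k by omega⟩
    · simp [h] at hk
  rw [← hinj.tsum_eq hsupp]
  simp only [le_add_iff_nonneg_right, Nat.zero_le, if_true, Nat.add_sub_cancel_left]
  rw [tsum_mul_left, tsum_geometric_of_lt_one hq0 hq1]

lemma summable_shift_geom (n : ℕ) (A q : ℝ) (hq0 : 0 ≤ q) (hq1 : q < 1) :
    Summable (fun k : ℕ => if n ≤ k then A * q ^ (k - n) else 0) := by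
  have hinj : Function.Injective (fun j : ℕ => n + j) := fun a b h => by simpa using h
  have hzero : ∀ k ∉ Set.range (fun j : ℕ => n + j),
      (if n ≤ k then A * q ^ (k - n) else 0) = 0 := by
    intro k hk
    have : ¬ n ≤ k := fun h => hk ⟨k - n, show n + (k - n) = k by omega⟩
    simp [this]
  rw [← hinj.summable_iff hzero]
  have : ((fun k : ℕ => if n ≤ k then A * q ^ (k - n) else 0) ∘ fun j => n + j)
      = fun j : ℕ => A * q ^ j := by
    funext j
    simp [Function.comp, Nat.add_sub_cancel_left]
  rw [this]
  exact (summable_geometric_of_lt_one hq0 hq1).mul_left A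

lemma pow_rpow_comm (x : ℝ) (hx : 0 ≤ x) (r : ℝ) (m : ℕ) : (x ^ m) ^ r = (x ^ r) ^ m := by
  rw [← Real.rpow_natCast x m, ← Real.rpow_mul hx, mul_comm, Real.rpow_mul hx,
    Real.rpow_natCast]

/-- **Lemma (EXP sequences), (i) ⟺ (iv).**
For `r > 0` and a non-increasing positive sequence `σ` (indexed from 1) tending to zero,
the condition (EXP) is equivalent to `∑_{k≥1} σ_k^r < ∞` together with `σ_n ≍ τ_n`,
where `τ` is the tail sequence. -/
theorem statement13 (r : ℝ) (hr : 0 < r) (σ : ℕ → ℝ)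
    (hpos : ∀ k, 1 ≤ k → 0 < σ k)
    (hanti : ∀ m n : ℕ, 1 ≤ m → m ≤ n → σ n ≤ σ m)
    (hlim : Tendsto σ atTop (nhds 0)) :
    (∃ b : ℝ, 1 < b ∧ ∃ C : ℝ, ∀ k n : ℕ, 1 ≤ k → k ≤ n →
        σ n * b ^ n / (σ k * b ^ k) ≤ C) ↔
    (Summable (fun k : ℕ => if 1 ≤ k then σ k ^ r else 0) ∧
      ∃ c₁ c₂ : ℝ, 0 < c₁ ∧ 0 < c₂ ∧ ∀ n : ℕ, 1 ≤ n →
        c₁ * σ n ≤ tailSeq r σ n ∧ tailSeq r σ n ≤ c₂ * σ n) := by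
  set F : ℕ → ℕ → ℝ := fun n k => if n ≤ k then σ k ^ r else 0 with hF
  set T : ℕ → ℝ := fun n => ∑' k, F n k with hT
  have htail : ∀ n, tailSeq r σ n = T n ^ (1 / r) := fun n => rfl
  have h1r : 0 < 1 / r := one_div_pos.mpr hr
  have hFnonneg : ∀ n, 1 ≤ n → ∀ k, 0 ≤ F n k := by
    intro n hn k
    simp only [hF]
    split
    · exact (Real.rpow_pos_of_pos (hpos k (hn.trans ‹n ≤ k›)) r).le
    · exact le_rfl
  have hTnonneg : ∀ n, 1 ≤ n → 0 ≤ T n := fun n hn => tsum_nonneg (hFnonneg n hn)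
  constructor
  · rintro ⟨b, hb, C, hC⟩
    have hb0 : (0 : ℝ) < b := lt_trans one_pos hb
    have hC1 : (1 : ℝ) ≤ C := by
      have h := hC 1 1 le_rfl le_rfl
      rwa [div_self (mul_pos (hpos 1 le_rfl) (pow_pos hb0 1)).ne'] at h
    have hC0 : (0 : ℝ) < C := lt_of_lt_of_le one_pos hC1
    -- key pointwise bound
    have key : ∀ k n : ℕ, 1 ≤ k → k ≤ n → σ n ≤ C * σ k * b⁻¹ ^ (n - k) := by
      intro k n hk hkn
      have h1 := hC k n hk hkn
      rw [div_le_iff₀ (mul_pos (hpos k hk) (pow_pos hb0 k))] at h1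
      have hbkn : b ^ n = b ^ k * b ^ (n - k) := by
        rw [← pow_add]; congr 1; omega
      have h2 : (σ n * b ^ (n - k)) * b ^ k ≤ (C * σ k) * b ^ k := by
        calc (σ n * b ^ (n - k)) * b ^ k = σ n * b ^ n := by rw [hbkn]; ring
          _ ≤ C * (σ k * b ^ k) := h1
          _ = (C * σ k) * b ^ k := by ring
      have h3 : σ n * b ^ (n - k) ≤ C * σ k := le_of_mul_le_mul_right h2 (pow_pos hb0 k)
      have hinv : b ^ (n - k) * b⁻¹ ^ (n - k) = 1 := by
        rw [← mul_pow, mul_inv_cancel₀ hb0.ne', one_pow]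
      calc σ n = σ n * b ^ (n - k) * b⁻¹ ^ (n - k) := by
            rw [mul_assoc, hinv, mul_one]
        _ ≤ C * σ k * b⁻¹ ^ (n - k) :=
            mul_le_mul_of_nonneg_right h3 (pow_nonneg (inv_nonneg.2 hb0.le) _)
    set ρ : ℝ := b⁻¹ ^ r with hρ
    have hρ0 : 0 < ρ := Real.rpow_pos_of_pos (inv_pos.2 hb0) r
    have hρ1 : ρ < 1 := Real.rpow_lt_one (inv_nonneg.2 hb0.le) ((inv_lt_one₀ hb0).2 hb) hr
    have key2 : ∀ k n : ℕ, 1 ≤ k → k ≤ n →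
        σ n ^ r ≤ (C ^ r * σ k ^ r) * ρ ^ (n - k) := by
      intro k n hk hkn
      have h4 : σ n ^ r ≤ (C * σ k * b⁻¹ ^ (n - k)) ^ r :=
        Real.rpow_le_rpow (hpos n (hk.trans hkn)).le (key k n hk hkn) hr.le
      calc σ n ^ r ≤ (C * σ k * b⁻¹ ^ (n - k)) ^ r := h4
        _ = (C ^ r * σ k ^ r) * ρ ^ (n - k) := by
            rw [Real.mul_rpow (mul_nonneg hC0.le (hpos k hk).le)
                (pow_nonneg (inv_nonneg.2 hb0.le) _),
              Real.mul_rpow hC0.le (hpos k hk).le,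
              pow_rpow_comm _ (inv_nonneg.2 hb0.le)]
    -- summability of tails, and tail bounds
    have hle : ∀ n, 1 ≤ n → ∀ k,
        F n k ≤ (if n ≤ k then (C ^ r * σ n ^ r) * ρ ^ (k - n) else 0) := by
      intro n hn k
      by_cases h : n ≤ k
      · simpa [hF, h] using key2 n k hn h
      · simp [hF, h]
    have hSumm : ∀ n, 1 ≤ n → Summable (F n) := fun n hn =>
      Summable.of_nonneg_of_le (hFnonneg n hn) (hle n hn)
        (summable_shift_geom n _ ρ hρ0.le hρ1)
    have hTub : ∀ n, 1 ≤ n → T n ≤ (C ^ r * (1 - ρ)⁻¹) * σ n ^ r := by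
      intro n hn
      calc T n ≤ ∑' k, (if n ≤ k then (C ^ r * σ n ^ r) * ρ ^ (k - n) else 0) :=
            Summable.tsum_le_tsum (hle n hn) (hSumm n hn) (summable_shift_geom n _ ρ hρ0.le hρ1)
        _ = (C ^ r * σ n ^ r) * (1 - ρ)⁻¹ := tsum_shift_geom n _ ρ hρ0.le hρ1
        _ = (C ^ r * (1 - ρ)⁻¹) * σ n ^ r := by ring
    have hTlb : ∀ n, 1 ≤ n → σ n ^ r ≤ T n := by
      intro n hn
      have h := Summable.le_tsum (hSumm n hn) n (fun j _ => hFnonneg n hn j)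
      simpa [hF] using h
    refine ⟨hSumm 1 le_rfl, 1, (C ^ r * (1 - ρ)⁻¹) ^ (1 / r), one_pos,
      Real.rpow_pos_of_pos (mul_pos (Real.rpow_pos_of_pos hC0 r)
        (inv_pos.2 (by linarith))) _, fun n hn => ⟨?_, ?_⟩⟩
    · rw [htail, one_mul]
      calc σ n = (σ n ^ r) ^ (1 / r) := by
            rw [one_div, Real.rpow_rpow_inv (hpos n hn).le hr.ne']
        _ ≤ T n ^ (1 / r) :=
            Real.rpow_le_rpow (Real.rpow_nonneg (hpos n hn).le r) (hTlb n hn)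
              h1r.le
    · rw [htail]
      calc T n ^ (1 / r) ≤ ((C ^ r * (1 - ρ)⁻¹) * σ n ^ r) ^ (1 / r) :=
            Real.rpow_le_rpow (hTnonneg n hn) (hTub n hn) h1r.le
        _ = (C ^ r * (1 - ρ)⁻¹) ^ (1 / r) * σ n := by
            rw [Real.mul_rpow (mul_nonneg (Real.rpow_nonneg hC0.le r) (inv_nonneg.2 (by linarith))) (Real.rpow_nonneg (hpos n hn).le r),
              one_div, Real.rpow_rpow_inv (hpos n hn).le hr.ne']
  · rintro ⟨hs, c₁, c₂, hc₁, hc₂, hbound⟩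
    have hs1 : Summable (F 1) := hs
    have hSumm : ∀ n, 1 ≤ n → Summable (F n) := by
      intro n hn
      refine Summable.of_nonneg_of_le (hFnonneg n hn) (fun k => ?_) hs1
      by_cases h : n ≤ k
      · simp [hF, h, hn.trans h]
      · simp only [hF, h, if_false]
        exact hFnonneg 1 le_rfl k
    have hrec : ∀ n, 1 ≤ n → T n = T (n + 1) + σ n ^ r := by
      intro n hn
      have funeq : ∀ k, F n k = F (n + 1) k + (if k = n then σ n ^ r else 0) := by
        intro k
        by_cases h1 : n ≤ k
        · by_cases h2 : k = n
          · subst h2; simp [hF]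
          · have h3 : n + 1 ≤ k := by omega
            simp [hF, h1, h3, h2]
        · have h2 : ¬ n + 1 ≤ k := by omega
          have h3 : k ≠ n := by omega
          simp [hF, h1, h2, h3]
      calc T n = ∑' k, (F (n + 1) k + (if k = n then σ n ^ r else 0)) :=
            tsum_congr funeq
        _ = T (n + 1) + σ n ^ r := by
            rw [Summable.tsum_add (hSumm (n + 1) (by omega)) (hasSum_ite_eq n (σ n ^ r)).summable,
              tsum_ite_eq]
    have hc₂r : 0 < c₂ ^ r := Real.rpow_pos_of_pos hc₂ r
    have hub : ∀ n, 1 ≤ n → T n ≤ c₂ ^ r * σ n ^ r := by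
      intro n hn
      have h := (hbound n hn).2
      rw [htail] at h
      have h2 : (T n ^ (1 / r)) ^ r ≤ (c₂ * σ n) ^ r :=
        Real.rpow_le_rpow (Real.rpow_nonneg (hTnonneg n hn) _) h hr.le
      rwa [one_div, Real.rpow_inv_rpow (hTnonneg n hn) hr.ne',
        Real.mul_rpow hc₂.le (hpos n hn).le] at h2
    have hlb : ∀ n, 1 ≤ n → σ n ^ r ≤ T n := by
      intro n hn
      have h := Summable.le_tsum (hSumm n hn) n (fun j _ => hFnonneg n hn j)
      simpa [hF] using h
    set q₀ : ℝ := 1 - (c₂ ^ r)⁻¹ with hq₀def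
    have hstep : ∀ n, 1 ≤ n → T (n + 1) ≤ q₀ * T n := by
      intro n hn
      have h1 : (c₂ ^ r)⁻¹ * T n ≤ σ n ^ r := (inv_mul_le_iff₀ hc₂r).2 (hub n hn)
      have h3 : T (n + 1) = T n - σ n ^ r := eq_sub_of_add_eq (hrec n hn).symm
      rw [h3, hq₀def, sub_mul, one_mul]
      exact sub_le_sub_left h1 (T n)
    have hq₀1 : q₀ < 1 := by
      have : (0 : ℝ) < (c₂ ^ r)⁻¹ := inv_pos.2 hc₂r
      rw [hq₀def]; linarith
    have hT1pos : 0 < T 1 :=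
      lt_of_lt_of_le (Real.rpow_pos_of_pos (hpos 1 le_rfl) r) (hlb 1 le_rfl)
    have hT2pos : 0 < T 2 :=
      lt_of_lt_of_le (Real.rpow_pos_of_pos (hpos 2 (by omega)) r) (hlb 2 (by omega))
    have hq₀pos : 0 < q₀ := by
      by_contra h
      push_neg at h
      have h2 : q₀ * T 1 ≤ 0 := mul_nonpos_of_nonpos_of_nonneg h hT1pos.le
      exact lt_irrefl (0 : ℝ)
        (lt_of_lt_of_le hT2pos ((hstep 1 le_rfl).trans h2))
    have hiter : ∀ m, 1 ≤ m → ∀ n, m ≤ n → T n ≤ q₀ ^ (n - m) * T m := by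
      intro m hm n hn
      induction n, hn using Nat.le_induction with
      | base => simp
      | succ n hn ih =>
        have h1 := hstep n (hm.trans hn)
        have h2 : q₀ * T n ≤ q₀ * (q₀ ^ (n - m) * T m) :=
          mul_le_mul_of_nonneg_left ih hq₀pos.le
        have h3 : q₀ * (q₀ ^ (n - m) * T m) = q₀ ^ (n + 1 - m) * T m := by
          rw [show n + 1 - m = (n - m) + 1 by omega, pow_succ]; ring
        exact h1.trans (h2.trans (le_of_eq h3))
    have key : ∀ m n : ℕ, 1 ≤ m → m ≤ n →
        σ n ^ r ≤ (c₂ * σ m) ^ r * q₀ ^ (n - m) := by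
      intro m n hm hmn
      calc σ n ^ r ≤ T n := hlb n (hm.trans hmn)
        _ ≤ q₀ ^ (n - m) * T m := hiter m hm n hmn
        _ ≤ q₀ ^ (n - m) * (c₂ ^ r * σ m ^ r) :=
            mul_le_mul_of_nonneg_left (hub m hm) (pow_nonneg hq₀pos.le _)
        _ = (c₂ * σ m) ^ r * q₀ ^ (n - m) := by
            rw [Real.mul_rpow hc₂.le (hpos m hm).le]; ring
    set q : ℝ := q₀ ^ (1 / r) with hqdef
    have hq0 : 0 < q := Real.rpow_pos_of_pos hq₀pos _
    have hq1 : q < 1 := Real.rpow_lt_one hq₀pos.le hq₀1 h1r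
    have hb : 1 < q⁻¹ := (one_lt_inv₀ hq0).2 hq1
    refine ⟨q⁻¹, hb, c₂, fun k n hk hkn => ?_⟩
    have hqk : (0 : ℝ) < q⁻¹ := inv_pos.2 hq0
    rw [div_le_iff₀ (mul_pos (hpos k hk) (pow_pos hqk k))]
    -- root of key
    have h4 : σ n ≤ c₂ * σ k * q ^ (n - k) := by
      have h5 : (σ n ^ r) ^ (1 / r) ≤ ((c₂ * σ k) ^ r * q₀ ^ (n - k)) ^ (1 / r) :=
        Real.rpow_le_rpow (Real.rpow_nonneg (hpos n (hk.trans hkn)).le _)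
          (key k n hk hkn) h1r.le
      rwa [one_div, Real.rpow_rpow_inv (hpos n (hk.trans hkn)).le hr.ne',
        ← one_div, Real.mul_rpow (Real.rpow_nonneg (mul_nonneg hc₂.le (hpos k hk).le) _)
          (pow_nonneg hq₀pos.le _),
        one_div, Real.rpow_rpow_inv (mul_nonneg hc₂.le (hpos k hk).le) hr.ne',
        ← one_div, pow_rpow_comm _ hq₀pos.le, ← hqdef] at h5
    have hbkn : q⁻¹ ^ n = q⁻¹ ^ k * q⁻¹ ^ (n - k) := by
      rw [← pow_add]; congr 1; omega
    have hone : q ^ (n - k) * q⁻¹ ^ (n - k) = 1 := by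
      rw [← mul_pow, mul_inv_cancel₀ hq0.ne', one_pow]
    calc σ n * q⁻¹ ^ n = σ n * q⁻¹ ^ (n - k) * q⁻¹ ^ k := by rw [hbkn]; ring
      _ ≤ (c₂ * σ k * q ^ (n - k)) * q⁻¹ ^ (n - k) * q⁻¹ ^ k :=
          mul_le_mul_of_nonneg_right
            (mul_le_mul_of_nonneg_right h4 (pow_nonneg hqk.le _))
            (pow_nonneg hqk.le _)
      _ = c₂ * (σ k * q⁻¹ ^ k) * (q ^ (n - k) * q⁻¹ ^ (n - k)) := by ring
      _ = c₂ * (σ k * q⁻¹ ^ k) := by rw [hone, mul_one]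
end

section
/- Let σ = (σ_k)_{k≥1} be a non-increasing sequence of positive real numbers with σ_k → 0. Then the following are equivalent: (i) there exist constants c₁, c₂ > 0 such that c₁ σ_n ≤ σ_{2n} ≤ c₂ σ_n for all n ≥ 1; (ii) there exists α > 0 such that inf{ σ_n n^α / (σ_k k^α) : (n,k) ∈ ℕ², k ≤ n } > 0. -/
open Filter

/-- **Lemma (Doubling Condition), (i) ⟺ (iii).**
For a non-increasing positive sequence `σ` (indexed from 1) tending to zero, the doubling
condition `σ_n ≍ σ_{2n}` is equivalent to the existence of `α > 0` with
`inf_{k ≤ n} σ_n n^α / (σ_k k^α) > 0`. -/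
theorem statement14 (σ : ℕ → ℝ)
    (hpos : ∀ k, 1 ≤ k → 0 < σ k)
    (hanti : ∀ m n : ℕ, 1 ≤ m → m ≤ n → σ n ≤ σ m)
    (hlim : Tendsto σ atTop (nhds 0)) :
    (∃ c₁ c₂ : ℝ, 0 < c₁ ∧ 0 < c₂ ∧ ∀ n : ℕ, 1 ≤ n →
        c₁ * σ n ≤ σ (2 * n) ∧ σ (2 * n) ≤ c₂ * σ n) ↔
    (∃ α : ℝ, 0 < α ∧ ∃ c : ℝ, 0 < c ∧ ∀ k n : ℕ, 1 ≤ k → k ≤ n →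
        c ≤ σ n * (n : ℝ) ^ α / (σ k * (k : ℝ) ^ α)) := by
  constructor
  · rintro ⟨c₁, c₂, hc₁, hc₂, h⟩
    have hσ1 : 0 < σ 1 := hpos 1 le_rfl
    have hc₁1 : c₁ ≤ 1 := by
      have h1 := (h 1 le_rfl).1
      have h2 : σ 2 ≤ σ 1 := hanti 1 2 le_rfl (by norm_num)
      nlinarith
    set α : ℝ := Real.logb 2 (1 / c₁) + 1 with hαdef
    have hαpos : 0 < α := by
      have : (0:ℝ) ≤ Real.logb 2 (1 / c₁) :=
        Real.logb_nonneg (by norm_num) (by rw [le_div_iff₀ hc₁]; linarith)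
      simp only [hαdef]; linarith
    have hX : (0:ℝ) < (2:ℝ) ^ α := Real.rpow_pos_of_pos (by norm_num) α
    have hkey : c₁ * (2:ℝ) ^ α = 2 := by
      rw [hαdef, Real.rpow_add (by norm_num), Real.rpow_logb (by norm_num) (by norm_num)
        (by positivity), Real.rpow_one]
      field_simp
    refine ⟨α, hαpos, c₁, hc₁, ?_⟩
    intro k n hk hkn
    have hn1 : 1 ≤ n := le_trans hk hkn
    have hkpos : 0 < k := hk
    have hσk : 0 < σ k := hpos k hk
    have hσn : 0 < σ n := hpos n hn1
    set j := Nat.log 2 (n / k) with hj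
    have hdiv : 1 ≤ n / k := (Nat.one_le_div_iff hkpos).2 hkn
    have h1 : 2 ^ j * k ≤ n := by
      have := Nat.pow_log_le_self 2 (by omega : n / k ≠ 0)
      exact (Nat.le_div_iff_mul_le hkpos).1 this
    have h2 : n < 2 ^ (j + 1) * k := by
      have := Nat.lt_pow_succ_log_self (by norm_num : 1 < 2) (n / k)
      exact (Nat.div_lt_iff_lt_mul hkpos).1 this
    have hiter : ∀ m : ℕ, c₁ ^ m * σ k ≤ σ (2 ^ m * k) := by
      intro m
      induction m with
      | zero => simp
      | succ i ih =>
        have hge1 : 1 ≤ 2 ^ i * k := Nat.one_le_iff_ne_zero.2 (by positivity)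
        have hdb := (h (2 ^ i * k) hge1).1
        have : σ (2 ^ (i + 1) * k) = σ (2 * (2 ^ i * k)) := by ring_nf
        rw [this, pow_succ]
        calc c₁ ^ i * c₁ * σ k = c₁ * (c₁ ^ i * σ k) := by ring
          _ ≤ c₁ * σ (2 ^ i * k) := by
              exact mul_le_mul_of_nonneg_left ih hc₁.le
          _ ≤ σ (2 * (2 ^ i * k)) := hdb
    have hA : c₁ ^ (j + 1) * σ k ≤ σ n := by
      refine le_trans (hiter (j + 1)) (hanti n (2 ^ (j + 1) * k) hn1 h2.le)
    -- rpow facts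
    have hcastn : ((2:ℝ) ^ j * (k:ℝ)) ≤ (n:ℝ) := by
      exact_mod_cast h1
    have hB : ((2:ℝ) ^ j * (k:ℝ)) ^ α ≤ (n:ℝ) ^ α :=
      Real.rpow_le_rpow (by positivity) hcastn hαpos.le
    have hsplit : ((2:ℝ) ^ j * (k:ℝ)) ^ α = ((2:ℝ) ^ α) ^ j * (k:ℝ) ^ α := by
      rw [Real.mul_rpow (by positivity) (by positivity)]
      congr 1
      rw [← Real.rpow_natCast (2:ℝ) j, ← Real.rpow_mul (by norm_num), mul_comm,
        Real.rpow_mul (by norm_num), Real.rpow_natCast]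
    rw [hsplit] at hB
    rw [le_div_iff₀ (by positivity)]
    have hmul : (c₁ ^ (j + 1) * σ k) * (((2:ℝ) ^ α) ^ j * (k:ℝ) ^ α) ≤ σ n * (n:ℝ) ^ α :=
      mul_le_mul hA hB (by positivity) hσn.le
    refine le_trans ?_ hmul
    have hrw : (c₁ ^ (j + 1) * σ k) * (((2:ℝ) ^ α) ^ j * (k:ℝ) ^ α)
        = c₁ * (c₁ * (2:ℝ) ^ α) ^ j * (σ k * (k:ℝ) ^ α) := by
      rw [mul_pow, pow_succ]; ring
    rw [hrw, hkey]
    have h2j : (1:ℝ) ≤ (2:ℝ) ^ j := one_le_pow₀ (by norm_num)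
    have hS : (0:ℝ) ≤ σ k * (k:ℝ) ^ α :=
      (mul_pos hσk (Real.rpow_pos_of_pos (by exact_mod_cast hkpos : (0:ℝ) < k) α)).le
    nlinarith [mul_nonneg (mul_nonneg hc₁.le hS) (sub_nonneg.2 h2j)]
  · rintro ⟨α, hα, c, hc, h⟩
    have hX : (0:ℝ) < (2:ℝ) ^ α := Real.rpow_pos_of_pos (by norm_num) α
    refine ⟨c / (2:ℝ) ^ α, 1, div_pos hc hX, one_pos, ?_⟩
    intro n hn
    have hσn : 0 < σ n := hpos n hn
    have hnpos : (0:ℝ) < (n:ℝ) := by exact_mod_cast hn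
    have hnα : (0:ℝ) < (n:ℝ) ^ α := Real.rpow_pos_of_pos hnpos α
    constructor
    · have hle := h n (2 * n) hn (by omega)
      rw [le_div_iff₀ (by positivity)] at hle
      have hcast : ((2 * n : ℕ) : ℝ) ^ α = (2:ℝ) ^ α * (n:ℝ) ^ α := by
        push_cast
        rw [Real.mul_rpow (by norm_num) hnpos.le]
      rw [hcast] at hle
      rw [div_mul_eq_mul_div, div_le_iff₀ hX]
      nlinarith
    · have := hanti n (2 * n) hn (by omega)
      linarith
end

section
/- Let σ = (σ_k)_{k≥1} be a non-increasing sequence of positive real numbers with σ_k → 0. Then the following are equivalent: (i) there exist constants c₁, c₂ > 0 such that c₁ σ_n ≤ σ_{2n} ≤ c₂ σ_n for all n ≥ 1; (ii) there exist constants c₁, c₂ > 0 such that c₁ σ_n ≤ (σ_1 · σ_2 · … · σ_n)^{1/n} ≤ c₂ σ_n for all n ≥ 1. -/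
/-!
The geometric mean always dominates `σ n`, and `σ (2n) ≤ σ n`, so only one inequality in each
condition carries content.

(i) ⇒ (ii): if `σ m ≤ b σ (2m)`, then `σ m ≤ b² σ n` for `n ≤ 4m`. Splitting `∏_{i ≤ n}` at
`m = ⌊n/2⌋` into the first `m` factors (induction) and the remaining `n - m` factors (each at most
`σ m`) gives `∏_{i ≤ n} σ i ≤ (b⁴ σ n)ⁿ`.

(ii) ⇒ (i): the first `n` factors of `∏_{i ≤ 2n} σ i` are at least `σ n` and the last `n` are at
least `σ (2n)`, so `(σ n σ (2n))ⁿ ≤ (c σ (2n))²ⁿ`, i.e. `σ n ≤ c² σ (2n)`.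
-/

open Filter Finset

lemma prod_Icc_one_eq_mul_prod_Ioc {M : Type*} [CommMonoid M] (f : ℕ → M) {m n : ℕ}
    (hmn : m ≤ n) : ∏ i ∈ Icc 1 n, f i = (∏ i ∈ Icc 1 m, f i) * ∏ i ∈ Ioc m n, f i := by
  have hIcc (k : ℕ) : Icc 1 k = Ioc 0 k := by rw [← Icc_add_one_left_eq_Ioc, zero_add]
  rw [hIcc, hIcc, prod_Ioc_consecutive f m.zero_le hmn]

lemma pow_card_le_prod_of_le {ι R : Type*} [CommSemiring R] [PartialOrder R] [IsOrderedRing R]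
    {s : Finset ι} {f : ι → R} {a : R} (ha : 0 ≤ a) (h : ∀ i ∈ s, a ≤ f i) :
    a ^ #s ≤ ∏ i ∈ s, f i := by
  simpa using prod_le_prod (fun _ _ => ha) h

lemma prod_le_pow_card_of_le {ι R : Type*} [CommSemiring R] [PartialOrder R] [IsOrderedRing R]
    {s : Finset ι} {f : ι → R} {a : R} (hf : ∀ i ∈ s, 0 ≤ f i) (h : ∀ i ∈ s, f i ≤ a) :
    ∏ i ∈ s, f i ≤ a ^ #s := by
  simpa using prod_le_prod hf h

lemma rpow_one_div_le_iff_le_pow {x y : ℝ} (hx : 0 ≤ x) (hy : 0 ≤ y) {n : ℕ} (hn : n ≠ 0) :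
    x ^ (1 / (n : ℝ)) ≤ y ↔ x ≤ y ^ n := by
  rw [one_div, Real.rpow_inv_le_iff_of_pos hx hy (by positivity), Real.rpow_natCast]

lemma le_rpow_one_div_iff_pow_le {x y : ℝ} (hx : 0 ≤ x) (hy : 0 ≤ y) {n : ℕ} (hn : n ≠ 0) :
    x ≤ y ^ (1 / (n : ℝ)) ↔ x ^ n ≤ y := by
  rw [one_div, Real.le_rpow_inv_iff_of_pos hx hy (by positivity), Real.rpow_natCast]

section AntitoneSequence

variable {σ : ℕ → ℝ}

lemma pow_le_prod_Icc_one (hpos : ∀ k, 1 ≤ k → 0 < σ k)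
    (hanti : ∀ m n : ℕ, 1 ≤ m → m ≤ n → σ n ≤ σ m) (n : ℕ) :
    σ n ^ n ≤ ∏ i ∈ Icc 1 n, σ i := by
  rcases n.eq_zero_or_pos with rfl | hn
  · simp
  simpa using pow_card_le_prod_of_le (hpos n hn).le fun i hi =>
    hanti i n (mem_Icc.1 hi).1 (mem_Icc.1 hi).2

lemma pow_le_prod_Ioc (hpos : ∀ k, 1 ≤ k → 0 < σ k)
    (hanti : ∀ m n : ℕ, 1 ≤ m → m ≤ n → σ n ≤ σ m) {m n : ℕ} (hmn : m < n) :
    σ n ^ (n - m) ≤ ∏ i ∈ Ioc m n, σ i := by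
  simpa using pow_card_le_prod_of_le (hpos n (by omega)).le fun i hi =>
    hanti i n (by grind) (mem_Ioc.1 hi).2

lemma prod_Ioc_le_pow (hpos : ∀ k, 1 ≤ k → 0 < σ k)
    (hanti : ∀ m n : ℕ, 1 ≤ m → m ≤ n → σ n ≤ σ m) {m : ℕ} (hm : 1 ≤ m) (n : ℕ) :
    ∏ i ∈ Ioc m n, σ i ≤ σ m ^ (n - m) := by
  simpa using prod_le_pow_card_of_le (fun i hi => (hpos i (by grind)).le)
    fun i hi => hanti m i hm (mem_Ioc.1 hi).1.le

lemma le_sq_mul_of_le_mul_two_mul (hanti : ∀ m n : ℕ, 1 ≤ m → m ≤ n → σ n ≤ σ m) {b : ℝ}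
    (hb : 0 ≤ b) (hdouble : ∀ m, 1 ≤ m → σ m ≤ b * σ (2 * m)) {m n : ℕ} (hm : 1 ≤ m)
    (hn : 1 ≤ n) (hnm : n ≤ 4 * m) : σ m ≤ b ^ 2 * σ n :=
  calc σ m ≤ b * σ (2 * m) := hdouble m hm
    _ ≤ b * (b * σ (2 * (2 * m))) := by gcongr; exact hdouble _ (by omega)
    _ ≤ b * (b * σ n) := by gcongr; exact hanti n _ hn (by omega)
    _ = b ^ 2 * σ n := by ring

lemma prod_Icc_one_le_pow (hpos : ∀ k, 1 ≤ k → 0 < σ k)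
    (hanti : ∀ m n : ℕ, 1 ≤ m → m ≤ n → σ n ≤ σ m) {b : ℝ}
    (hdouble : ∀ m, 1 ≤ m → σ m ≤ b * σ (2 * m)) {n : ℕ} (hn : 1 ≤ n) :
    ∏ i ∈ Icc 1 n, σ i ≤ (b ^ 4 * σ n) ^ n := by
  have hb : 1 ≤ b := by
    by_contra! hb
    nlinarith [hdouble 1 le_rfl, hanti 1 2 le_rfl one_le_two, hpos 2 one_le_two]
  induction n using Nat.strong_induction_on with
  | _ n ih =>
  rcases hn.eq_or_lt with rfl | hn
  · simpa using le_mul_of_one_le_left (hpos 1 le_rfl).le (one_le_pow₀ hb)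
  set m := n / 2
  have hm : 1 ≤ m := by omega
  have hmn : m < n := by omega
  have hσm := (hpos m hm).le
  have hσn := (hpos n (by omega)).le
  calc ∏ i ∈ Icc 1 n, σ i = (∏ i ∈ Icc 1 m, σ i) * ∏ i ∈ Ioc m n, σ i :=
        prod_Icc_one_eq_mul_prod_Ioc σ hmn.le
    _ ≤ (b ^ 4 * σ m) ^ m * σ m ^ (n - m) :=
        mul_le_mul (ih m hmn hm) (prod_Ioc_le_pow hpos hanti hm n)
          (prod_nonneg fun i hi => (hpos i (by grind)).le) (by positivity)
    _ = (b ^ 4) ^ m * σ m ^ n := by rw [mul_pow, mul_assoc, ← pow_add, Nat.add_sub_cancel' hmn.le]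
    _ ≤ (b ^ 4) ^ m * (b ^ 2 * σ n) ^ n := by
        gcongr
        exact le_sq_mul_of_le_mul_two_mul hanti (by positivity) hdouble hm (by omega) (by omega)
    _ = b ^ (4 * m + 2 * n) * σ n ^ n := by ring
    _ ≤ b ^ (4 * n) * σ n ^ n := by gcongr; omega
    _ = (b ^ 4 * σ n) ^ n := by ring

lemma le_sq_mul_of_prod_Icc_one_le_pow (hpos : ∀ k, 1 ≤ k → 0 < σ k)
    (hanti : ∀ m n : ℕ, 1 ≤ m → m ≤ n → σ n ≤ σ m) {c : ℝ} {n : ℕ} (hn : 1 ≤ n)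
    (h : ∏ i ∈ Icc 1 (2 * n), σ i ≤ (c * σ (2 * n)) ^ (2 * n)) : σ n ≤ c ^ 2 * σ (2 * n) := by
  have hσn := (hpos n hn).le
  have hσ2n := hpos (2 * n) (by omega)
  have hpow : (σ n * σ (2 * n)) ^ n ≤ (c ^ 2 * σ (2 * n) * σ (2 * n)) ^ n :=
    calc (σ n * σ (2 * n)) ^ n = σ n ^ n * σ (2 * n) ^ (2 * n - n) := by
          rw [mul_pow, Nat.two_mul, Nat.add_sub_cancel]
      _ ≤ (∏ i ∈ Icc 1 n, σ i) * ∏ i ∈ Ioc n (2 * n), σ i :=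
          mul_le_mul (pow_le_prod_Icc_one hpos hanti n) (pow_le_prod_Ioc hpos hanti (by omega))
            (by positivity) (prod_nonneg fun i hi => (hpos i (by grind)).le)
      _ = ∏ i ∈ Icc 1 (2 * n), σ i := (prod_Icc_one_eq_mul_prod_Ioc σ (by omega)).symm
      _ ≤ (c * σ (2 * n)) ^ (2 * n) := h
      _ = (c ^ 2 * σ (2 * n) * σ (2 * n)) ^ n := by ring
  exact le_of_mul_le_mul_right (le_of_pow_le_pow_left₀ (by omega) (by positivity) hpow) hσ2n

end AntitoneSequence

theorem statement15_general (σ : ℕ → ℝ)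
    (hpos : ∀ k, 1 ≤ k → 0 < σ k)
    (hanti : ∀ m n : ℕ, 1 ≤ m → m ≤ n → σ n ≤ σ m) :
    (∃ c₁ c₂ : ℝ, 0 < c₁ ∧ 0 < c₂ ∧ ∀ n : ℕ, 1 ≤ n →
        c₁ * σ n ≤ σ (2 * n) ∧ σ (2 * n) ≤ c₂ * σ n) ↔
    (∃ c₁ c₂ : ℝ, 0 < c₁ ∧ 0 < c₂ ∧ ∀ n : ℕ, 1 ≤ n →
        c₁ * σ n ≤ (∏ i ∈ Finset.Icc 1 n, σ i) ^ (1 / (n : ℝ)) ∧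
        (∏ i ∈ Finset.Icc 1 n, σ i) ^ (1 / (n : ℝ)) ≤ c₂ * σ n) := by
  have hprod (n : ℕ) : 0 ≤ ∏ i ∈ Icc 1 n, σ i := prod_nonneg fun i hi => (hpos i (by grind)).le
  constructor
  · rintro ⟨c₁, c₂, hc₁, -, h⟩
    have hdouble (m : ℕ) (hm : 1 ≤ m) : σ m ≤ c₁⁻¹ * σ (2 * m) :=
      (le_inv_mul_iff₀ hc₁).2 (h m hm).1
    refine ⟨1, c₁⁻¹ ^ 4, one_pos, by positivity, fun n hn => ⟨?_, ?_⟩⟩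
    · rw [one_mul, le_rpow_one_div_iff_pow_le (hpos n hn).le (hprod n) (by omega)]
      exact pow_le_prod_Icc_one hpos hanti n
    · have hσn := (hpos n hn).le
      rw [rpow_one_div_le_iff_le_pow (hprod n) (by positivity) (by omega)]
      exact prod_Icc_one_le_pow hpos hanti hdouble hn
  · rintro ⟨c₁, c₂, -, hc₂, h⟩
    refine ⟨(c₂ ^ 2)⁻¹, 1, by positivity, one_pos, fun n hn => ⟨?_, ?_⟩⟩
    · have hσ2n := (hpos (2 * n) (by omega)).le
      rw [inv_mul_le_iff₀ (by positivity)]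
      refine le_sq_mul_of_prod_Icc_one_le_pow hpos hanti hn ?_
      rw [← rpow_one_div_le_iff_le_pow (hprod _) (by positivity) (by omega)]
      exact (h (2 * n) (by omega)).2
    · rw [one_mul]
      exact hanti n (2 * n) hn (by omega)

/-- **Lemma (Doubling Condition), (i) ⟺ (iv).**
For a non-increasing positive sequence `σ` (indexed from 1) tending to zero, the doubling
condition `σ_n ≍ σ_{2n}` is equivalent to `σ_n ≍ (σ_1 ⋯ σ_n)^{1/n}`. -/
theorem statement15 (σ : ℕ → ℝ)
    (hpos : ∀ k, 1 ≤ k → 0 < σ k)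
    (hanti : ∀ m n : ℕ, 1 ≤ m → m ≤ n → σ n ≤ σ m)
    (hlim : Tendsto σ atTop (nhds 0)) :
    (∃ c₁ c₂ : ℝ, 0 < c₁ ∧ 0 < c₂ ∧ ∀ n : ℕ, 1 ≤ n →
        c₁ * σ n ≤ σ (2 * n) ∧ σ (2 * n) ≤ c₂ * σ n) ↔
    (∃ c₁ c₂ : ℝ, 0 < c₁ ∧ 0 < c₂ ∧ ∀ n : ℕ, 1 ≤ n →
        c₁ * σ n ≤ (∏ i ∈ Finset.Icc 1 n, σ i) ^ (1 / (n : ℝ)) ∧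
        (∏ i ∈ Finset.Icc 1 n, σ i) ^ (1 / (n : ℝ)) ≤ c₂ * σ n) :=
  statement15_general σ hpos hanti
end

section
/- Let r > 0 and let σ = (σ_k)_{k≥1} be a non-increasing sequence of positive real numbers with σ_k → 0 and ∑_{k≥1} σ_k^r < ∞, with tail sequence τ_n = (∑_{k≥n} σ_k^r)^{1/r}. Then the following are equivalent: (i) there exists α > 1/r such that sup{ σ_n n^α / (σ_k k^α) : (n,k) ∈ ℕ², k ≤ n } < ∞; (ii) there exists a constant c > 0 such that τ_n ≤ c · σ_n · n^{1/r} for all n ≥ 1. -/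
open Filter

lemma bernoulli_neg' {p x : ℝ} (hp : p ≤ 0) (hx : -1 < x) : 1 + p * x ≤ (1 + x) ^ p := by
  have h1 : (0:ℝ) < 1 + x := by linarith
  rw [Real.rpow_def_of_pos h1]
  have hlog : Real.log (1+x) ≤ x := by
    have := Real.log_le_sub_one_of_pos h1; linarith
  have h2 : p * x ≤ p * Real.log (1+x) := mul_le_mul_of_nonpos_left hlog hp
  have h3 := Real.add_one_le_exp (p * Real.log (1+x))
  have h4 : Real.exp (Real.log (1+x) * p) = Real.exp (p * Real.log (1+x)) := by ring_nf
  linarith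

lemma bernoulli_small' {ε x : ℝ} (hε : 0 < ε) (hε1 : ε ≤ 1) (hx : 0 ≤ x) :
    (1 + x) ^ ε ≤ 1 + ε * x := by
  have h1 : (1:ℝ) ≤ 1/ε := by
    rw [le_div_iff₀ hε]; linarith
  have hb := one_add_mul_self_le_rpow_one_add (s := ε * x) (by nlinarith) h1
  have h2 : 1 + x ≤ (1 + ε*x) ^ (1/ε) := by
    have heq : 1 + 1/ε * (ε * x) = 1 + x := by field_simp
    linarith [heq ▸ hb]
  have h3 : (1+x) ^ ε ≤ ((1 + ε*x) ^ (1/ε)) ^ ε :=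
    Real.rpow_le_rpow (by linarith) h2 hε.le
  calc (1+x)^ε ≤ ((1+ε*x)^(1/ε))^ε := h3
    _ = (1+ε*x) ^ ((1/ε) * ε) := (Real.rpow_mul (by nlinarith) _ _).symm
    _ = 1 + ε*x := by rw [one_div, inv_mul_cancel₀ hε.ne', Real.rpow_one]

/-- **Lemma (Tail Sequence), part (i).**
For `r > 0` and a non-increasing positive sequence `σ` (indexed from 1) tending to zero
with `∑_{k≥1} σ_k^r < ∞`, the condition
`∃ α > 1/r, sup_{k ≤ n} σ_n n^α / (σ_k k^α) < ∞` is equivalent to condition (ALP):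
`∃ c > 0, τ_n ≤ c σ_n n^{1/r}` for all `n ≥ 1`. -/
theorem statement17 (r : ℝ) (hr : 0 < r) (σ : ℕ → ℝ)
    (hpos : ∀ k, 1 ≤ k → 0 < σ k)
    (hanti : ∀ m n : ℕ, 1 ≤ m → m ≤ n → σ n ≤ σ m)
    (hlim : Tendsto σ atTop (nhds 0))
    (hsum : Summable (fun k : ℕ => if 1 ≤ k then σ k ^ r else 0)) :
    (∃ α : ℝ, 1 / r < α ∧ ∃ C : ℝ, ∀ k n : ℕ, 1 ≤ k → k ≤ n →
        σ n * (n : ℝ) ^ α / (σ k * (k : ℝ) ^ α) ≤ C) ↔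
    (∃ c : ℝ, 0 < c ∧ ∀ n : ℕ, 1 ≤ n →
        tailSeq r σ n ≤ c * σ n * (n : ℝ) ^ (1 / r)) := by
  set T : ℕ → ℝ := fun n => ∑' k : ℕ, if n ≤ k then σ k ^ r else 0 with hTdef
  have htail : ∀ n, tailSeq r σ n = T n ^ (1/r) := fun n => rfl
  have hg_nonneg : ∀ n, 1 ≤ n → ∀ k, 0 ≤ (if n ≤ k then σ k ^ r else 0 : ℝ) := by
    intro n hn k
    split
    · exact (Real.rpow_pos_of_pos (hpos k (le_trans hn (by assumption))) r).le
    · exact le_refl 0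
  have hg_summable : ∀ n, 1 ≤ n → Summable (fun k => if n ≤ k then σ k ^ r else 0 : ℕ → ℝ) := by
    intro n hn
    apply Summable.of_nonneg_of_le (hg_nonneg n hn) _ hsum
    intro k
    by_cases h : n ≤ k
    · simp only [h, if_true, le_trans hn h, if_true]; exact le_refl _
    · simp only [h, if_false]
      split
      · exact (Real.rpow_pos_of_pos (hpos k (by assumption)) r).le
      · exact le_refl 0
  have hTnn : ∀ n, 1 ≤ n → 0 ≤ T n := fun n hn => tsum_nonneg (hg_nonneg n hn)
  have hTpos : ∀ n, 1 ≤ n → 0 < T n := by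
    intro n hn
    have h1 : (if n ≤ n then σ n ^ r else 0 : ℝ) ≤ T n :=
      Summable.le_tsum (hg_summable n hn) n (fun i _ => hg_nonneg n hn i)
    rw [if_pos le_rfl] at h1
    exact lt_of_lt_of_le (Real.rpow_pos_of_pos (hpos n hn) r) h1
  have hchunk : ∀ n m : ℕ, 1 ≤ n → n ≤ m → ((m + 1 - n : ℕ) : ℝ) * σ m ^ r ≤ T n := by
    intro n m hn hnm
    have h1 : ∀ k ∈ Finset.Icc n m, σ m ^ r ≤ (if n ≤ k then σ k ^ r else 0 : ℝ) := by
      intro k hk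
      rw [Finset.mem_Icc] at hk
      rw [if_pos hk.1]
      exact Real.rpow_le_rpow (hpos m (le_trans hn hnm)).le (hanti k m (le_trans hn hk.1) hk.2) hr.le
    have h2 := Finset.card_nsmul_le_sum (Finset.Icc n m) _ _ h1
    have h3 : ∑ k ∈ Finset.Icc n m, (if n ≤ k then σ k ^ r else 0 : ℝ) ≤ T n :=
      Summable.sum_le_tsum _ (fun i _ => hg_nonneg n hn i) (hg_summable n hn)
    rw [Nat.card_Icc, nsmul_eq_mul] at h2
    exact le_trans h2 h3
  have hTsplit : ∀ n : ℕ, 1 ≤ n → T n = σ n ^ r + T (n+1) := by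
    intro n hn
    have hfun : ∀ k : ℕ, (if n ≤ k then σ k ^ r else 0 : ℝ)
        = (if k = n then σ n ^ r else 0) + (if n+1 ≤ k then σ k ^ r else 0) := by
      intro k
      rcases lt_trichotomy k n with h|h|h
      · rw [if_neg (by omega), if_neg (by omega), if_neg (by omega)]; ring
      · subst h; rw [if_pos le_rfl, if_pos rfl, if_neg (by omega)]; ring
      · rw [if_pos (by omega), if_neg (by omega), if_pos (by omega)]; ring
    calc T n = ∑' k : ℕ, ((if k = n then σ n ^ r else 0) + (if n+1 ≤ k then σ k ^ r else 0) : ℝ) := by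
          rw [hTdef]; exact tsum_congr hfun
      _ = σ n ^ r + T (n+1) := by
          rw [Summable.tsum_add ((hasSum_ite_eq n (σ n ^ r)).summable) (hg_summable (n+1) (by omega)),
            tsum_ite_eq]
  constructor
  · -- (i) → (ii)
    rintro ⟨α, hα, C, hC⟩
    set s := α * r with hs
    have hs1 : 1 < s := by
      rw [hs]
      calc (1:ℝ) = (1/r) * r := by field_simp
        _ < α * r := by apply mul_lt_mul_of_pos_right hα hr
    have hC1 : (1:ℝ) ≤ C := by
      have h1 := hC 1 1 le_rfl le_rfl
      rw [Nat.cast_one, Real.one_rpow, mul_one, div_self (hpos 1 le_rfl).ne'] at h1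
      exact h1
    have hCpos : (0:ℝ) < C := lt_of_lt_of_le one_pos hC1
    -- pointwise bound
    have hpt : ∀ n m : ℕ, 1 ≤ n → n ≤ m →
        σ m ^ r ≤ (C^r * σ n ^ r * (n:ℝ)^s) * (m:ℝ)^(-s) := by
      intro n m hn hnm
      have hm1 : 1 ≤ m := le_trans hn hnm
      have hnr : (0:ℝ) < n := by exact_mod_cast hn
      have hmr : (0:ℝ) < m := by exact_mod_cast hm1
      have h1 := hC n m hn hnm
      rw [div_le_iff₀ (mul_pos (hpos n hn) (Real.rpow_pos_of_pos hnr α))] at h1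
      have h2 : (σ m * (m:ℝ)^α)^r ≤ (C * (σ n * (n:ℝ)^α))^r :=
        Real.rpow_le_rpow (mul_nonneg (hpos m hm1).le (Real.rpow_nonneg hmr.le α)) h1 hr.le
      rw [Real.mul_rpow (hpos m hm1).le (Real.rpow_nonneg hmr.le α),
        Real.mul_rpow hCpos.le (mul_nonneg (hpos n hn).le (Real.rpow_nonneg hnr.le α)),
        Real.mul_rpow (hpos n hn).le (Real.rpow_nonneg hnr.le α),
        ← Real.rpow_mul hmr.le, ← Real.rpow_mul hnr.le, ← hs] at h2
      rw [Real.rpow_neg hmr.le, ← div_eq_mul_inv, le_div_iff₀ (Real.rpow_pos_of_pos hmr s)]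
      nlinarith [h2]
    -- tail p-series bound
    have hps : ∀ n : ℕ, 1 ≤ n →
        (∑' m : ℕ, if n ≤ m then (m:ℝ)^(-s) else 0) ≤ (1 + 1/(s-1)) * (n:ℝ)^(1-s) := by
      intro n hn
      have hnr : (0:ℝ) < n := by exact_mod_cast hn
      -- pointwise telescoping bound
      have hpt2 : ∀ m : ℕ, 2 ≤ m →
          (m:ℝ)^(-s) ≤ ((m:ℝ)-1)^(1-s)/(s-1) - (m:ℝ)^(1-s)/(s-1) := by
        intro m hm
        have hmr : (2:ℝ) ≤ m := by exact_mod_cast hm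
        have hm0 : (0:ℝ) < m := by linarith
        have hb := bernoulli_neg' (p := 1-s) (x := -1/(m:ℝ)) (by linarith)
          (by rw [neg_div]; rw [neg_lt_neg_iff]; rw [div_lt_one hm0]; linarith)
        have he : (1:ℝ) + (-1/(m:ℝ)) = ((m:ℝ)-1)/m := by field_simp; ring
        rw [he, Real.div_rpow (by linarith) hm0.le] at hb
        have hm1s : (0:ℝ) < (m:ℝ)^(1-s) := Real.rpow_pos_of_pos hm0 _
        rw [le_div_iff₀ hm1s] at hb
        -- hb : (1 + (1-s)*(-1/m)) * m^(1-s) ≤ (m-1)^(1-s)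
        have he2 : (m:ℝ)^(1-s) = (m:ℝ)^(-s) * m := by
          rw [show (1:ℝ)-s = -s + 1 by ring, Real.rpow_add hm0, Real.rpow_one]
        have he3 : (1 + (1-s)*(-1/(m:ℝ))) * ((m:ℝ)^(-s) * m)
            = (m:ℝ)^(-s) * m + (s-1) * (m:ℝ)^(-s) := by field_simp; ring
        rw [he2] at hb
        rw [he3] at hb
        rw [he2]
        have hs1' : (0:ℝ) < s - 1 := by linarith
        rw [div_sub_div_same, le_div_iff₀ hs1']
        linarith
      -- telescoping sum over Ico
      have htel : ∀ M : ℕ, n+1 ≤ M → ∑ m ∈ Finset.Ico (n+1) M, (m:ℝ)^(-s)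
          ≤ (n:ℝ)^(1-s)/(s-1) - ((M-1:ℕ):ℝ)^(1-s)/(s-1) := by
        intro M hM
        induction M, hM using Nat.le_induction with
        | base => rw [Finset.Ico_self, Finset.sum_empty]; simp
        | succ M hM ih =>
          rw [Finset.sum_Ico_succ_top hM]
          have h2M : 2 ≤ M := by omega
          have hcast : ((M-1:ℕ):ℝ) = (M:ℝ) - 1 := by
            have : (1:ℕ) ≤ M := by omega
            push_cast [Nat.cast_sub this]; ring
          have hp := hpt2 M h2M
          have hcast2 : ((M+1-1:ℕ):ℝ) = (M:ℝ) := by norm_num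
          rw [hcast2]
          rw [hcast] at ih
          linarith
      -- nonneg of terms
      have hnn : ∀ m : ℕ, (0:ℝ) ≤ (if n ≤ m then (m:ℝ)^(-s) else 0) := by
        intro m; split
        · exact Real.rpow_nonneg (Nat.cast_nonneg m) _
        · exact le_refl 0
      have hhnn : (0:ℝ) ≤ (n:ℝ)^(1-s)/(s-1) :=
        div_nonneg (Real.rpow_nonneg hnr.le _) (by linarith)
      -- bound partial sums
      apply le_trans (Real.tsum_le_of_sum_range_le hnn
        (c := (n:ℝ)^(-s) + (n:ℝ)^(1-s)/(s-1)) ?_) ?_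
      · intro M
        have heq : ∑ m ∈ Finset.range M, (if n ≤ m then (m:ℝ)^(-s) else 0)
            = ∑ m ∈ Finset.Ico n M, (m:ℝ)^(-s) := by
          rw [← Finset.sum_filter]
          apply Finset.sum_congr _ (fun _ _ => rfl)
          ext a
          simp only [Finset.mem_filter, Finset.mem_range, Finset.mem_Ico]
          omega
        rw [heq]
        by_cases hM : n < M
        · rw [Finset.sum_eq_sum_Ico_succ_bot hM]
          have := htel M hM
          have hnn2 : (0:ℝ) ≤ ((M-1:ℕ):ℝ)^(1-s)/(s-1) :=
            div_nonneg (Real.rpow_nonneg (Nat.cast_nonneg _) _) (by linarith)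
          linarith
        · rw [Finset.Ico_eq_empty (by omega), Finset.sum_empty]
          positivity
      · have h1 : (n:ℝ)^(-s) ≤ (n:ℝ)^(1-s) :=
          Real.rpow_le_rpow_of_exponent_le (by exact_mod_cast hn) (by linarith)
        have hs0 : s - 1 ≠ 0 := by linarith
        have h2 : (1 + 1/(s-1)) * (n:ℝ)^(1-s) = (n:ℝ)^(1-s) + (n:ℝ)^(1-s)/(s-1) := by
          field_simp
        rw [h2]
        linarith
    -- combine
    have hTbound : ∀ n : ℕ, 1 ≤ n → T n ≤ (C^r * (1 + 1/(s-1))) * (σ n ^ r * n) := by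
      intro n hn
      have hnr : (0:ℝ) < n := by exact_mod_cast hn
      have hconst : (0:ℝ) ≤ C^r * σ n ^ r * (n:ℝ)^s :=
        mul_nonneg (mul_nonneg (Real.rpow_pos_of_pos hCpos r).le
          (Real.rpow_pos_of_pos (hpos n hn) r).le) (Real.rpow_nonneg hnr.le s)
      have hindsum : Summable (fun m : ℕ => if n ≤ m then (m:ℝ)^(-s) else 0) := by
        apply Summable.of_nonneg_of_le _ _ (Real.summable_nat_rpow.mpr (by linarith : -s < -1))
        · intro m; split
          · exact Real.rpow_nonneg (Nat.cast_nonneg m) _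
          · exact le_refl 0
        · intro m; split
          · exact le_refl _
          · exact Real.rpow_nonneg (Nat.cast_nonneg m) _
      have h1 : T n ≤ ∑' m : ℕ, (C^r * σ n ^ r * (n:ℝ)^s) * (if n ≤ m then (m:ℝ)^(-s) else 0) := by
        rw [hTdef]
        apply Summable.tsum_le_tsum _ (hg_summable n hn) (hindsum.mul_left _)
        intro m
        by_cases h : n ≤ m
        · rw [if_pos h, if_pos h]
          exact hpt n m hn h
        · rw [if_neg h, if_neg h, mul_zero]
      rw [tsum_mul_left] at h1
      have h2 := mul_le_mul_of_nonneg_left (hps n hn) hconst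
      have h3 : (C^r * σ n ^ r * (n:ℝ)^s) * ((1 + 1/(s-1)) * (n:ℝ)^(1-s))
          = (C^r * (1 + 1/(s-1))) * (σ n ^ r * ((n:ℝ)^s * (n:ℝ)^(1-s))) := by ring
      have h4 : (n:ℝ)^s * (n:ℝ)^(1-s) = n := by
        rw [← Real.rpow_add hnr]; norm_num
      rw [h3, h4] at h2
      exact le_trans h1 h2
    refine ⟨(C^r * (1 + 1/(s-1)))^(1/r), ?_, ?_⟩
    · apply Real.rpow_pos_of_pos
      have h5 : (0:ℝ) < 1/(s-1) := div_pos one_pos (by linarith)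
      exact mul_pos (Real.rpow_pos_of_pos hCpos r) (by linarith)
    · intro n hn
      have hnr : (0:ℝ) < n := by exact_mod_cast hn
      rw [htail]
      have h1 := hTbound n hn
      have h2 : T n ^ (1/r) ≤ ((C^r * (1 + 1/(s-1))) * (σ n ^ r * n)) ^ (1/r) :=
        Real.rpow_le_rpow (hTnn n hn) h1 (one_div_pos.mpr hr).le
      have hKnn : (0:ℝ) ≤ C^r * (1 + 1/(s-1)) := by
        have h5 : (0:ℝ) < 1/(s-1) := div_pos one_pos (by linarith)
        have h6 : (0:ℝ) < C^r := Real.rpow_pos_of_pos hCpos r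
        nlinarith
      have h3 : ((C^r * (1 + 1/(s-1))) * (σ n ^ r * n)) ^ (1/r)
          = (C^r * (1 + 1/(s-1)))^(1/r) * σ n * (n:ℝ)^(1/r) := by
        rw [Real.mul_rpow hKnn (mul_nonneg (Real.rpow_pos_of_pos (hpos n hn) r).le hnr.le),
          Real.mul_rpow (Real.rpow_pos_of_pos (hpos n hn) r).le hnr.le,
          ← Real.rpow_mul (hpos n hn).le, mul_one_div, div_self hr.ne', Real.rpow_one]
        ring
      rw [h3] at h2
      exact h2
  · -- (ii) → (i)
    rintro ⟨c, hc, halp⟩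
    have hcr : (0:ℝ) < c^r := Real.rpow_pos_of_pos hc r
    have hTc : ∀ n : ℕ, 1 ≤ n → T n ≤ c^r * σ n ^ r * n := by
      intro n hn
      have hnr : (0:ℝ) < n := by exact_mod_cast hn
      have h1 := halp n hn
      rw [htail] at h1
      have h2 : (T n ^ (1/r)) ^ r ≤ (c * σ n * (n:ℝ)^(1/r)) ^ r :=
        Real.rpow_le_rpow (Real.rpow_nonneg (hTnn n hn) _) h1 hr.le
      have hrr : 1/r * r = 1 := by field_simp
      rw [← Real.rpow_mul (hTnn n hn),
        Real.mul_rpow (mul_nonneg hc.le (hpos n hn).le) (Real.rpow_nonneg hnr.le _),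
        Real.mul_rpow hc.le (hpos n hn).le,
        ← Real.rpow_mul hnr.le, hrr, Real.rpow_one, Real.rpow_one] at h2
      linarith [h2]
    set ε : ℝ := min 1 (c^r)⁻¹ with hεdef
    have hε : 0 < ε := lt_min one_pos (inv_pos.mpr hcr)
    have hε1 : ε ≤ 1 := min_le_left _ _
    have hεc : ε * c^r ≤ 1 := by
      have h1 : ε ≤ (c^r)⁻¹ := min_le_right _ _
      calc ε * c^r ≤ (c^r)⁻¹ * c^r := mul_le_mul_of_nonneg_right h1 hcr.le
        _ = 1 := inv_mul_cancel₀ hcr.ne'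
    -- single step decay
    have hstep : ∀ m : ℕ, 1 ≤ m → T (m+1) * ((m+1:ℕ):ℝ)^ε ≤ T m * (m:ℝ)^ε := by
      intro m hm
      have hmr : (0:ℝ) < m := by exact_mod_cast hm
      have hmr1 : (1:ℝ) ≤ m := by exact_mod_cast hm
      have ha : (0:ℝ) ≤ σ m ^ r := (Real.rpow_pos_of_pos (hpos m hm) r).le
      have hT1 : T (m+1) = T m - σ m ^ r := by
        have := hTsplit m hm; linarith
      have h0 : ε * T m ≤ σ m ^ r * m := by
        have h1 := hTc m hm
        have h2 : ε * T m ≤ ε * (c^r * σ m ^ r * m) :=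
          mul_le_mul_of_nonneg_left h1 hε.le
        have h3 : ε * (c^r * σ m ^ r * m) = (ε * c^r) * (σ m ^ r * m) := by ring
        have h4 : (ε * c^r) * (σ m ^ r * m) ≤ 1 * (σ m ^ r * m) :=
          mul_le_mul_of_nonneg_right hεc (by positivity)
        rw [h3] at h2; linarith
      have hb : ((m:ℝ)+1)^ε ≤ (m:ℝ)^ε * (1 + ε/m) := by
        have he : (m:ℝ)+1 = m * (1 + 1/m) := by field_simp
        rw [he, Real.mul_rpow hmr.le (by positivity)]
        apply mul_le_mul_of_nonneg_left _ (Real.rpow_nonneg hmr.le _)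
        calc (1 + 1/(m:ℝ))^ε ≤ 1 + ε * (1/m) := bernoulli_small' hε hε1 (by positivity)
          _ = 1 + ε/m := by ring
      have hT1nn : 0 ≤ T m - σ m ^ r := by
        rw [← hT1]; exact hTnn (m+1) (by omega)
      have key : (T m - σ m ^ r) * (1 + ε/m) ≤ T m := by
        have he : (T m - σ m ^ r) * (1 + ε/m) = ((T m - σ m ^ r) * (m + ε))/m := by
          field_simp
        rw [he, div_le_iff₀ hmr]
        nlinarith [h0, mul_nonneg ha hε.le]
      have hcast : ((m+1:ℕ):ℝ) = (m:ℝ)+1 := by push_cast; ring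
      calc T (m+1) * ((m+1:ℕ):ℝ)^ε = (T m - σ m ^ r) * ((m:ℝ)+1)^ε := by rw [hT1, hcast]
        _ ≤ (T m - σ m ^ r) * ((m:ℝ)^ε * (1 + ε/m)) := mul_le_mul_of_nonneg_left hb hT1nn
        _ = ((T m - σ m ^ r) * (1 + ε/m)) * (m:ℝ)^ε := by ring
        _ ≤ T m * (m:ℝ)^ε := mul_le_mul_of_nonneg_right key (Real.rpow_nonneg hmr.le _)
    have hdecay : ∀ k m : ℕ, 1 ≤ k → k ≤ m → T m * (m:ℝ)^ε ≤ T k * (k:ℝ)^ε := by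
      intro k m hk hkm
      induction m, hkm using Nat.le_induction with
      | base => exact le_refl _
      | succ m hkm ih =>
        exact le_trans (hstep m (le_trans hk hkm)) ih
    have hc1 : (1:ℝ) ≤ c^r := by
      have h1 : σ 1 ^ r ≤ T 1 := by
        have h2 : (if 1 ≤ 1 then σ 1 ^ r else 0 : ℝ) ≤ T 1 :=
          Summable.le_tsum (hg_summable 1 le_rfl) 1 (fun i _ => hg_nonneg 1 le_rfl i)
        rwa [if_pos le_rfl] at h2
      have h3 := hTc 1 le_rfl
      have h4 : (0:ℝ) < σ 1 ^ r := Real.rpow_pos_of_pos (hpos 1 le_rfl) r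
      rw [Nat.cast_one, mul_one] at h3
      nlinarith
    -- key inequality at r-th power level
    have hkey : ∀ k m : ℕ, 1 ≤ k → k ≤ m →
        σ m ^ r * (m:ℝ)^(1+ε) ≤ (4 * c^r) * (σ k ^ r * (k:ℝ)^(1+ε)) := by
      intro k m hk hkm
      have hm1 : 1 ≤ m := le_trans hk hkm
      have hmr : (0:ℝ) < m := by exact_mod_cast hm1
      have hkr : (0:ℝ) < k := by exact_mod_cast hk
      have e1 : (m:ℝ)^(1+ε) = m * (m:ℝ)^ε := by
        rw [Real.rpow_add hmr, Real.rpow_one]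
      have e2 : (k:ℝ)^(1+ε) = k * (k:ℝ)^ε := by
        rw [Real.rpow_add hkr, Real.rpow_one]
      set n := (m+1)/2 with hndef
      have h1n : 1 ≤ n := by omega
      have hnm : n ≤ m := by omega
      have hnr : (0:ℝ) < n := by exact_mod_cast h1n
      by_cases hkn : k ≤ n
      · have hch := hchunk n m h1n hnm
        have hcnt : (m:ℝ) ≤ 2 * ((m+1-n : ℕ):ℝ) := by
          have h : m ≤ 2*(m+1-n) := by omega
          exact_mod_cast h
        have ha : (0:ℝ) ≤ σ m ^ r := (Real.rpow_pos_of_pos (hpos m hm1) r).le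
        have hA : (m:ℝ) * σ m ^ r ≤ 2 * T n := by
          nlinarith [mul_le_mul_of_nonneg_right hcnt ha]
        have hB : (m:ℝ)^ε ≤ 2 * (n:ℝ)^ε := by
          have h2n : (m:ℝ) ≤ 2*(n:ℝ) := by exact_mod_cast (by omega : m ≤ 2*n)
          calc (m:ℝ)^ε ≤ ((2:ℝ)*n)^ε := Real.rpow_le_rpow hmr.le h2n hε.le
            _ = (2:ℝ)^ε * (n:ℝ)^ε := Real.mul_rpow (by norm_num) hnr.le
            _ ≤ 2 * (n:ℝ)^ε := by
                apply mul_le_mul_of_nonneg_right _ (Real.rpow_nonneg hnr.le _)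
                calc (2:ℝ)^ε ≤ (2:ℝ)^(1:ℝ) := Real.rpow_le_rpow_of_exponent_le one_le_two hε1
                  _ = 2 := Real.rpow_one 2
        have hD := hdecay k n hk hkn
        have hTk := hTc k hk
        have hTnnn : (0:ℝ) ≤ T n := hTnn n h1n
        calc σ m ^ r * (m:ℝ)^(1+ε) = ((m:ℝ) * σ m ^ r) * (m:ℝ)^ε := by rw [e1]; ring
          _ ≤ (2 * T n) * (m:ℝ)^ε :=
              mul_le_mul_of_nonneg_right hA (Real.rpow_nonneg hmr.le _)
          _ ≤ (2 * T n) * (2 * (n:ℝ)^ε) :=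
              mul_le_mul_of_nonneg_left hB (by linarith)
          _ = 4 * (T n * (n:ℝ)^ε) := by ring
          _ ≤ 4 * (T k * (k:ℝ)^ε) := by linarith
          _ ≤ 4 * ((c^r * σ k ^ r * k) * (k:ℝ)^ε) := by
              have := mul_le_mul_of_nonneg_right hTk (Real.rpow_nonneg hkr.le ε)
              linarith
          _ = (4 * c^r) * (σ k ^ r * (k:ℝ)^(1+ε)) := by rw [e2]; ring
      · have hm2k : (m:ℝ) ≤ 2*(k:ℝ) := by exact_mod_cast (by omega : m ≤ 2*k)
        have hσ : σ m ^ r ≤ σ k ^ r :=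
          Real.rpow_le_rpow (hpos m hm1).le (hanti k m hk hkm) hr.le
        have hmp : (m:ℝ)^(1+ε) ≤ 4 * (k:ℝ)^(1+ε) := by
          calc (m:ℝ)^(1+ε) ≤ ((2:ℝ)*k)^(1+ε) :=
              Real.rpow_le_rpow hmr.le hm2k (by linarith)
            _ = (2:ℝ)^(1+ε) * (k:ℝ)^(1+ε) := Real.mul_rpow (by norm_num) hkr.le
            _ ≤ 4 * (k:ℝ)^(1+ε) := by
                apply mul_le_mul_of_nonneg_right _ (Real.rpow_nonneg hkr.le _)
                calc (2:ℝ)^(1+ε) ≤ (2:ℝ)^(2:ℝ) :=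
                    Real.rpow_le_rpow_of_exponent_le one_le_two (by linarith)
                  _ = 4 := by
                      rw [show (2:ℝ) = ((2:ℕ):ℝ) by norm_num, Real.rpow_natCast]
                      norm_num
        have h4 : σ m ^ r * (m:ℝ)^(1+ε) ≤ σ k ^ r * (4 * (k:ℝ)^(1+ε)) :=
          mul_le_mul hσ hmp (Real.rpow_nonneg hmr.le _) (Real.rpow_pos_of_pos (hpos k hk) r).le
        have h5 : (0:ℝ) ≤ σ k ^ r * (k:ℝ)^(1+ε) :=
          mul_nonneg (Real.rpow_pos_of_pos (hpos k hk) r).le (Real.rpow_nonneg hkr.le _)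
        have h6 : (0:ℝ) ≤ (c^r - 1) * (σ k ^ r * (k:ℝ)^(1+ε)) :=
          mul_nonneg (by linarith) h5
        have h7 : σ k ^ r * (4 * (k:ℝ)^(1+ε)) = 4 * (σ k ^ r * (k:ℝ)^(1+ε)) := by ring
        have h8 : 4 * c^r * (σ k ^ r * (k:ℝ)^(1+ε))
            = 4 * (σ k ^ r * (k:ℝ)^(1+ε)) + 4 * ((c^r - 1) * (σ k ^ r * (k:ℝ)^(1+ε))) := by ring
        rw [h8]
        rw [h7] at h4
        linarith
    -- conclude
    refine ⟨(1+ε)/r, ?_, (4*c^r)^(1/r), ?_⟩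
    · rw [div_lt_div_iff₀ hr hr]
      nlinarith [mul_pos hε hr]
    · intro k m hk hkm
      have hm1 : 1 ≤ m := le_trans hk hkm
      have hmr : (0:ℝ) < m := by exact_mod_cast hm1
      have hkr : (0:ℝ) < k := by exact_mod_cast hk
      have hden : (0:ℝ) < σ k * (k:ℝ)^((1+ε)/r) :=
        mul_pos (hpos k hk) (Real.rpow_pos_of_pos hkr _)
      rw [div_le_iff₀ hden]
      have h1 := hkey k m hk hkm
      have h2 : (σ m ^ r * (m:ℝ)^(1+ε))^(1/r)
          ≤ ((4 * c^r) * (σ k ^ r * (k:ℝ)^(1+ε)))^(1/r) :=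
        Real.rpow_le_rpow (mul_nonneg (Real.rpow_pos_of_pos (hpos m hm1) r).le
          (Real.rpow_nonneg hmr.le _)) h1 (one_div_pos.mpr hr).le
      have e3 : (σ m ^ r * (m:ℝ)^(1+ε))^(1/r) = σ m * (m:ℝ)^((1+ε)/r) := by
        rw [Real.mul_rpow (Real.rpow_nonneg (hpos m hm1).le _) (Real.rpow_nonneg hmr.le _),
          ← Real.rpow_mul (hpos m hm1).le, ← Real.rpow_mul hmr.le,
          mul_one_div, div_self hr.ne', Real.rpow_one, mul_one_div]
      have e4 : ((4 * c^r) * (σ k ^ r * (k:ℝ)^(1+ε)))^(1/r)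
          = (4*c^r)^(1/r) * (σ k * (k:ℝ)^((1+ε)/r)) := by
        rw [Real.mul_rpow (mul_nonneg (by norm_num) hcr.le)
            (mul_nonneg (Real.rpow_pos_of_pos (hpos k hk) r).le (Real.rpow_nonneg hkr.le _)),
          Real.mul_rpow (Real.rpow_pos_of_pos (hpos k hk) r).le (Real.rpow_nonneg hkr.le _),
          ← Real.rpow_mul (hpos k hk).le, ← Real.rpow_mul hkr.le,
          mul_one_div, div_self hr.ne', Real.rpow_one, mul_one_div]
      rw [e3, e4] at h2
      exact h2
end

section
/- Let r > 0 and let σ = (σ_k)_{k≥1} be a non-increasing sequence of positive real numbers with σ_k → 0 and ∑_{k≥1} σ_k^r < ∞, with tail sequence τ_n = (∑_{k≥n} σ_k^r)^{1/r}. Then the following are equivalent: (i) there exist constants c₁, c₂ > 0 such that c₁ τ_n ≤ τ_{2n} ≤ c₂ τ_n for all n ≥ 1; (ii) there exists a constant c > 0 such that τ_n ≥ c · σ_n · n^{1/r} for all n ≥ 1. -/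
open Filter

namespace Statement18Aux

/-- The tail sum `T n = ∑_{k ≥ n} σ_k^r`. -/
noncomputable def TT (r : ℝ) (σ : ℕ → ℝ) (n : ℕ) : ℝ :=
  ∑' k : ℕ, if n ≤ k then σ k ^ r else 0

lemma tailSeq_eq (r : ℝ) (σ : ℕ → ℝ) (n : ℕ) : tailSeq r σ n = (TT r σ n) ^ (1/r) := rfl

lemma rpow_inv_rpow' {r x : ℝ} (hr : 0 < r) (hx : 0 ≤ x) : (x ^ (1/r)) ^ r = x := by
  rw [← Real.rpow_mul hx, one_div_mul_cancel hr.ne', Real.rpow_one]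

lemma rpow_rpow_inv' {r x : ℝ} (hr : 0 < r) (hx : 0 ≤ x) : (x ^ r) ^ (1/r) = x := by
  rw [← Real.rpow_mul hx, mul_one_div_cancel hr.ne', Real.rpow_one]

lemma exp_le_one_sub {x : ℝ} (hx0 : 0 ≤ x) (hx2 : x ≤ 1/2) : Real.exp (-(2*x)) ≤ 1 - x := by
  have h1 : 2*x + 1 ≤ Real.exp (2*x) := Real.add_one_le_exp _
  have h3 : Real.exp (-(2*x)) * Real.exp (2*x) = 1 := by rw [← Real.exp_add]; norm_num
  nlinarith [Real.exp_pos (-(2*x)), Real.exp_pos (2*x)]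

section Main

variable {r : ℝ} {σ : ℕ → ℝ}

lemma summable_TT (hr : 0 < r) (hpos : ∀ k, 1 ≤ k → 0 < σ k)
    (hsum : Summable (fun k : ℕ => if 1 ≤ k then σ k ^ r else 0))
    (n : ℕ) (hn : 1 ≤ n) :
    Summable (fun k : ℕ => if n ≤ k then σ k ^ r else 0) := by
  apply Summable.of_nonneg_of_le _ _ hsum
  · intro k
    by_cases h : n ≤ k
    · simp only [h, if_true]
      exact (Real.rpow_pos_of_pos (hpos k (le_trans hn h)) r).le
    · simp [h]
  · intro k
    by_cases h : n ≤ k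
    · simp [h, le_trans hn h]
    · simp only [h, if_false]
      by_cases h1 : 1 ≤ k
      · simp only [h1, if_true]
        exact (Real.rpow_pos_of_pos (hpos k h1) r).le
      · simp [h1]

lemma TT_nonneg (hr : 0 < r) (hpos : ∀ k, 1 ≤ k → 0 < σ k) (n : ℕ) (hn : 1 ≤ n) :
    0 ≤ TT r σ n := by
  apply tsum_nonneg
  intro k
  by_cases h : n ≤ k
  · simp only [h, if_true]
    exact (Real.rpow_pos_of_pos (hpos k (le_trans hn h)) r).le
  · simp [h]

lemma TT_pos (hr : 0 < r) (hpos : ∀ k, 1 ≤ k → 0 < σ k)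
    (hsum : Summable (fun k : ℕ => if 1 ≤ k then σ k ^ r else 0))
    (n : ℕ) (hn : 1 ≤ n) : 0 < TT r σ n := by
  refine Summable.tsum_pos (summable_TT hr hpos hsum n hn) ?_ n ?_
  · intro k
    by_cases h : n ≤ k
    · simp only [h, if_true]
      exact (Real.rpow_pos_of_pos (hpos k (le_trans hn h)) r).le
    · simp [h]
  · simp only [le_refl, if_true]
    exact Real.rpow_pos_of_pos (hpos n hn) r

lemma TT_anti (hr : 0 < r) (hpos : ∀ k, 1 ≤ k → 0 < σ k)
    (hsum : Summable (fun k : ℕ => if 1 ≤ k then σ k ^ r else 0))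
    {m n : ℕ} (hm : 1 ≤ m) (hmn : m ≤ n) : TT r σ n ≤ TT r σ m := by
  apply Summable.tsum_le_tsum _ (summable_TT hr hpos hsum n (le_trans hm hmn))
    (summable_TT hr hpos hsum m hm)
  intro k
  by_cases h : n ≤ k
  · simp [h, le_trans hmn h]
  · simp only [h, if_false]
    by_cases h1 : m ≤ k
    · simp only [h1, if_true]
      exact (Real.rpow_pos_of_pos (hpos k (le_trans hm h1)) r).le
    · simp [h1]

lemma TT_decomp (hr : 0 < r) (hpos : ∀ k, 1 ≤ k → 0 < σ k)
    (hsum : Summable (fun k : ℕ => if 1 ≤ k then σ k ^ r else 0))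
    {n m : ℕ} (hn : 1 ≤ n) (hnm : n ≤ m) :
    TT r σ n = (∑ k ∈ Finset.Ico n m, σ k ^ r) + TT r σ m := by
  have key : ∀ k : ℕ, (if n ≤ k then σ k ^ r else 0) =
      (if k ∈ Finset.Ico n m then σ k ^ r else 0) + (if m ≤ k then σ k ^ r else 0) := by
    intro k
    simp only [Finset.mem_Ico]
    split_ifs <;> first | ring1 | omega
  have hsupp : ∀ k : ℕ, k ∉ Finset.Ico n m →
      (if k ∈ Finset.Ico n m then σ k ^ r else 0) = 0 := by
    intro k hk; simp [hk]
  have hsum1 : Summable (fun k : ℕ => if k ∈ Finset.Ico n m then σ k ^ r else 0) :=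
    summable_of_ne_finset_zero hsupp
  calc TT r σ n
      = ∑' k : ℕ, ((if k ∈ Finset.Ico n m then σ k ^ r else 0)
          + (if m ≤ k then σ k ^ r else 0)) := tsum_congr key
    _ = (∑' k : ℕ, if k ∈ Finset.Ico n m then σ k ^ r else 0) + TT r σ m :=
        Summable.tsum_add hsum1 (summable_TT hr hpos hsum m (le_trans hn hnm))
    _ = (∑ k ∈ Finset.Ico n m, σ k ^ r) + TT r σ m := by
        rw [tsum_eq_sum hsupp]
        congr 1
        apply Finset.sum_congr rfl
        intro k hk; simp [hk]

lemma tail_le_of_T (hr : 0 < r) {b : ℝ} {n m : ℕ} (hb : 0 ≤ b)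
    (hTn : 0 ≤ TT r σ n) (h : b * TT r σ n ≤ TT r σ m) :
    b ^ (1/r) * tailSeq r σ n ≤ tailSeq r σ m := by
  rw [tailSeq_eq, tailSeq_eq, ← Real.mul_rpow hb hTn]
  exact Real.rpow_le_rpow (mul_nonneg hb hTn) h (by positivity)

lemma T_le_of_tail (hr : 0 < r) {b : ℝ} {n m : ℕ} (hb : 0 ≤ b)
    (hTn : 0 ≤ TT r σ n) (hTm : 0 ≤ TT r σ m)
    (h : b * tailSeq r σ n ≤ tailSeq r σ m) :
    b ^ r * TT r σ n ≤ TT r σ m := by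
  have h0 : (0:ℝ) ≤ b * tailSeq r σ n :=
    mul_nonneg hb (Real.rpow_nonneg hTn _)
  have h2 := Real.rpow_le_rpow h0 h hr.le
  rw [tailSeq_eq, tailSeq_eq, Real.mul_rpow hb (Real.rpow_nonneg hTn _),
    rpow_inv_rpow' hr hTn, rpow_inv_rpow' hr hTm] at h2
  exact h2

end Main

end Statement18Aux

open Statement18Aux in
/-- **Lemma (Tail Sequence), part (ii).** -/
theorem statement18 (r : ℝ) (hr : 0 < r) (σ : ℕ → ℝ)
    (hpos : ∀ k, 1 ≤ k → 0 < σ k)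
    (hanti : ∀ m n : ℕ, 1 ≤ m → m ≤ n → σ n ≤ σ m)
    (hlim : Tendsto σ atTop (nhds 0))
    (hsum : Summable (fun k : ℕ => if 1 ≤ k then σ k ^ r else 0)) :
    (∃ c₁ c₂ : ℝ, 0 < c₁ ∧ 0 < c₂ ∧ ∀ n : ℕ, 1 ≤ n →
        c₁ * tailSeq r σ n ≤ tailSeq r σ (2 * n) ∧
        tailSeq r σ (2 * n) ≤ c₂ * tailSeq r σ n) ↔
    (∃ c : ℝ, 0 < c ∧ ∀ n : ℕ, 1 ≤ n →
        c * (σ n * (n : ℝ) ^ (1 / r)) ≤ tailSeq r σ n) := by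
  have hTpos : ∀ n : ℕ, 1 ≤ n → 0 < TT r σ n := fun n hn => TT_pos hr hpos hsum n hn
  have hTnn : ∀ n : ℕ, 1 ≤ n → 0 ≤ TT r σ n := fun n hn => (hTpos n hn).le
  constructor
  · -- doubling → AMP
    rintro ⟨c₁, c₂, hc₁, hc₂, hdoub⟩
    set a := c₁ ^ r with ha
    have ha0 : 0 < a := Real.rpow_pos_of_pos hc₁ r
    have hA : ∀ n : ℕ, 1 ≤ n → a * TT r σ n ≤ TT r σ (2*n) := by
      intro n hn
      exact T_le_of_tail hr hc₁.le (hTnn n hn) (hTnn (2*n) (by omega)) (hdoub n hn).1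
    -- key pointwise bound for n ≥ 2
    have hKey : ∀ n : ℕ, 2 ≤ n → (a/3) * ((n:ℝ) * σ n ^ r) ≤ TT r σ n := by
      intro n hn2
      set m := (n+1)/2 with hm
      have hm1 : 1 ≤ m := by omega
      have hmn : m ≤ n := by omega
      have hn2m : n ≤ 2*m := by omega
      have hcard : (Finset.Ico m n).card = n - m := Nat.card_Ico m n
      -- lower bound the block sum
      have hblock : ((n - m : ℕ) : ℝ) * σ n ^ r ≤ ∑ k ∈ Finset.Ico m n, σ k ^ r := by
        have := Finset.card_nsmul_le_sum (Finset.Ico m n) (fun k => σ k ^ r) (σ n ^ r)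
          (by
            intro k hk
            rw [Finset.mem_Ico] at hk
            exact Real.rpow_le_rpow (hpos n (by omega)).le
              (hanti k n (le_trans hm1 hk.1) hk.2.le) hr.le)
        rwa [hcard, nsmul_eq_mul] at this
      have hTm : ((n - m : ℕ) : ℝ) * σ n ^ r ≤ TT r σ m := by
        have hd := TT_decomp hr hpos hsum hm1 hmn
        have := hTnn n (by omega)
        linarith
      have hchain : a * (((n - m : ℕ) : ℝ) * σ n ^ r) ≤ TT r σ n := by
        calc a * (((n - m : ℕ) : ℝ) * σ n ^ r) ≤ a * TT r σ m := by
              exact mul_le_mul_of_nonneg_left hTm ha0.le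
          _ ≤ TT r σ (2*m) := hA m hm1
          _ ≤ TT r σ n := TT_anti hr hpos hsum (by omega) hn2m
      have hnat : n ≤ 3 * (n - m) := by omega
      have hcast : (n : ℝ) ≤ 3 * ((n - m : ℕ) : ℝ) := by exact_mod_cast hnat
      have hσnn : (0:ℝ) ≤ σ n ^ r := (Real.rpow_pos_of_pos (hpos n (by omega)) r).le
      nlinarith [mul_le_mul_of_nonneg_right hcast hσnn]
    set b := min (a/3) 1 with hb
    have hb0 : 0 < b := lt_min (by positivity) one_pos
    have hBT : ∀ n : ℕ, 1 ≤ n → b * ((n:ℝ) * σ n ^ r) ≤ TT r σ n := by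
      intro n hn
      rcases eq_or_lt_of_le hn with h1 | h2
      · -- n = 1
        have hn1 : n = 1 := h1.symm
        subst hn1
        have h1T : σ 1 ^ r ≤ TT r σ 1 := by
          have hd := TT_decomp hr hpos hsum (le_refl 1) (show (1:ℕ) ≤ 2 by norm_num)
          have hs : ∑ k ∈ Finset.Ico 1 2, σ k ^ r = σ 1 ^ r := by simp
          have := hTnn 2 (by norm_num)
          rw [hs] at hd
          linarith
        have hσnn : (0:ℝ) ≤ σ 1 ^ r := (Real.rpow_pos_of_pos (hpos 1 le_rfl) r).le
        have hble : b ≤ 1 := min_le_right _ _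
        have : b * ((1:ℕ) * σ 1 ^ r) ≤ 1 * σ 1 ^ r := by
          push_cast
          nlinarith
        calc b * (((1:ℕ):ℝ) * σ 1 ^ r) ≤ 1 * σ 1 ^ r := this
          _ = σ 1 ^ r := one_mul _
          _ ≤ TT r σ 1 := h1T
      · have hn2 : 2 ≤ n := h2
        have hkey := hKey n hn2
        have hble : b ≤ a/3 := min_le_left _ _
        have hnn : (0:ℝ) ≤ (n:ℝ) * σ n ^ r := by
          have := (Real.rpow_pos_of_pos (hpos n hn) r).le
          positivity
        nlinarith
    refine ⟨b ^ (1/r), Real.rpow_pos_of_pos hb0 _, ?_⟩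
    intro n hn
    have hσ : 0 ≤ σ n := (hpos n hn).le
    have hσr : 0 ≤ σ n ^ r := Real.rpow_nonneg hσ r
    have hx : (0:ℝ) ≤ (n:ℝ) * σ n ^ r := by positivity
    have h1 : (b * ((n:ℝ) * σ n ^ r)) ^ (1/r) ≤ tailSeq r σ n := by
      rw [tailSeq_eq]
      exact Real.rpow_le_rpow (by positivity) (hBT n hn) (by positivity)
    have h2 : (b * ((n:ℝ) * σ n ^ r)) ^ (1/r)
        = b ^ (1/r) * (σ n * (n:ℝ) ^ (1/r)) := by
      rw [Real.mul_rpow hb0.le hx, Real.mul_rpow (Nat.cast_nonneg n) hσr,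
        rpow_rpow_inv' hr hσ, mul_comm ((n:ℝ) ^ (1/r)) (σ n)]
    rw [← h2]; exact h1
  · -- AMP → doubling
    rintro ⟨c, hc, hAMP⟩
    set C := (1/c) ^ r with hCdef
    have hC0 : 0 < C := Real.rpow_pos_of_pos (by positivity) r
    have hCc : C * c ^ r = 1 := by
      rw [← Real.mul_rpow (by positivity) hc.le, one_div_mul_cancel hc.ne', Real.one_rpow]
    -- AMP at the level of T
    have hS : ∀ n : ℕ, 1 ≤ n → (n : ℝ) * σ n ^ r ≤ C * TT r σ n := by
      intro n hn
      have h := hAMP n hn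
      have hσ : 0 ≤ σ n := (hpos n hn).le
      have h0 : (0:ℝ) ≤ c * (σ n * (n:ℝ) ^ (1/r)) := by positivity
      have h2 := Real.rpow_le_rpow h0 h hr.le
      rw [tailSeq_eq, rpow_inv_rpow' hr (hTnn n hn),
        Real.mul_rpow hc.le (by positivity),
        Real.mul_rpow hσ (by positivity),
        rpow_inv_rpow' hr (Nat.cast_nonneg n)] at h2
      -- h2 : c ^ r * (σ n ^ r * n) ≤ TT r σ n
      calc (n : ℝ) * σ n ^ r = C * (c ^ r * (σ n ^ r * (n:ℝ))) := by
            rw [← mul_assoc, hCc, one_mul]; ring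
        _ ≤ C * TT r σ n := mul_le_mul_of_nonneg_left h2 hC0.le
    -- step inequality
    set N := max 1 (Nat.ceil (2*C)) with hNdef
    have hN1 : 1 ≤ N := le_max_left _ _
    have hNC : 2*C ≤ (N:ℝ) := by
      calc 2*C ≤ (Nat.ceil (2*C) : ℝ) := Nat.le_ceil _
        _ ≤ (N:ℝ) := by exact_mod_cast le_max_right 1 (Nat.ceil (2*C))
    have hstep : ∀ m : ℕ, N ≤ m →
        Real.exp (-(2*C) * (1/(m:ℝ))) * TT r σ m ≤ TT r σ (m+1) := by
      intro m hm
      have hm1 : 1 ≤ m := le_trans hN1 hm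
      have hm0 : (0:ℝ) < m := by exact_mod_cast hm1
      have hNm : (N:ℝ) ≤ m := by exact_mod_cast hm
      have hσm : σ m ^ r ≤ C / m * TT r σ m := by
        rw [div_mul_eq_mul_div, le_div_iff₀ hm0]
        calc σ m ^ r * m = (m:ℝ) * σ m ^ r := by ring
          _ ≤ C * TT r σ m := hS m hm1
      have hdec : TT r σ m = σ m ^ r + TT r σ (m+1) := by
        have hd := TT_decomp hr hpos hsum hm1 (Nat.le_succ m)
        have hsing : ∑ k ∈ Finset.Ico m (m+1), σ k ^ r = σ m ^ r := by simp
        rw [hsing] at hd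
        exact hd
      have hlow : (1 - C/m) * TT r σ m ≤ TT r σ (m+1) := by
        have hexp : (1 - C/m) * TT r σ m = TT r σ m - C/m * TT r σ m := by ring
        rw [hexp]
        linarith
      have hx0 : 0 ≤ C/m := by positivity
      have hx2 : C/m ≤ 1/2 := by
        rw [div_le_iff₀ hm0]
        linarith
      have hee : Real.exp (-(2*C) * (1/(m:ℝ))) ≤ 1 - C/m := by
        have harg : -(2*C) * (1/(m:ℝ)) = -(2*(C/m)) := by ring
        rw [harg]
        exact exp_le_one_sub hx0 hx2
      calc Real.exp (-(2*C) * (1/(m:ℝ))) * TT r σ m ≤ (1 - C/m) * TT r σ m :=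
            mul_le_mul_of_nonneg_right hee (hTnn m hm1)
        _ ≤ TT r σ (m+1) := hlow
    -- iterate
    have hiter : ∀ n : ℕ, N ≤ n → ∀ j : ℕ,
        Real.exp (-(2*C) * ∑ k ∈ Finset.Ico n (n+j), (1:ℝ)/(k:ℝ)) * TT r σ n
          ≤ TT r σ (n+j) := by
      intro n hn j
      induction j with
      | zero => simp
      | succ j ih =>
        have hnj : N ≤ n + j := le_trans hn (Nat.le_add_right n j)
        have hEpos := Real.exp_pos (-(2*C) * (1/((n+j:ℕ):ℝ)))
        have hsum_top : ∑ k ∈ Finset.Ico n (n+(j+1)), (1:ℝ)/(k:ℝ)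
            = (∑ k ∈ Finset.Ico n (n+j), (1:ℝ)/(k:ℝ)) + 1/((n+j:ℕ):ℝ) := by
          have : n + (j+1) = (n+j) + 1 := rfl
          rw [this, Finset.sum_Ico_succ_top (Nat.le_add_right n j)]
        calc Real.exp (-(2*C) * ∑ k ∈ Finset.Ico n (n+(j+1)), (1:ℝ)/(k:ℝ)) * TT r σ n
            = Real.exp (-(2*C) * (1/((n+j:ℕ):ℝ))) *
              (Real.exp (-(2*C) * ∑ k ∈ Finset.Ico n (n+j), (1:ℝ)/(k:ℝ)) * TT r σ n) := by
              rw [hsum_top, show -(2*C) * ((∑ k ∈ Finset.Ico n (n+j), (1:ℝ)/(k:ℝ)) + 1/((n+j:ℕ):ℝ))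
                  = -(2*C) * (1/((n+j:ℕ):ℝ)) + -(2*C) * ∑ k ∈ Finset.Ico n (n+j), (1:ℝ)/(k:ℝ) from by ring,
                Real.exp_add, mul_assoc]
          _ ≤ Real.exp (-(2*C) * (1/((n+j:ℕ):ℝ))) * TT r σ (n+j) :=
              mul_le_mul_of_nonneg_left ih hEpos.le
          _ ≤ TT r σ ((n+j)+1) := hstep (n+j) hnj
    -- doubling for n ≥ N
    have hlarge : ∀ n : ℕ, N ≤ n → Real.exp (-(2*C)) * TT r σ n ≤ TT r σ (2*n) := by
      intro n hn
      rw [show (2*n : ℕ) = n + n from two_mul n]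
      have hn1 : 1 ≤ n := le_trans hN1 hn
      have hn0 : (0:ℝ) < n := by exact_mod_cast hn1
      have hSle : ∑ k ∈ Finset.Ico n (n+n), (1:ℝ)/(k:ℝ) ≤ 1 := by
        have hcard : (Finset.Ico n (n+n)).card = n := by
          rw [Nat.card_Ico]; omega
        calc ∑ k ∈ Finset.Ico n (n+n), (1:ℝ)/(k:ℝ)
            ≤ (Finset.Ico n (n+n)).card • ((1:ℝ)/n) := by
              apply Finset.sum_le_card_nsmul
              intro k hk
              rw [Finset.mem_Ico] at hk
              have hk0 : (0:ℝ) < k := by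
                have : 1 ≤ k := le_trans hn1 hk.1
                exact_mod_cast this
              apply one_div_le_one_div_of_le hn0
              exact_mod_cast hk.1
          _ = 1 := by
              rw [hcard, nsmul_eq_mul]
              field_simp
      have hmono : Real.exp (-(2*C)) ≤
          Real.exp (-(2*C) * ∑ k ∈ Finset.Ico n (n+n), (1:ℝ)/(k:ℝ)) := by
        apply Real.exp_le_exp.mpr
        nlinarith
      calc Real.exp (-(2*C)) * TT r σ n
          ≤ Real.exp (-(2*C) * ∑ k ∈ Finset.Ico n (n+n), (1:ℝ)/(k:ℝ)) * TT r σ n :=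
            mul_le_mul_of_nonneg_right hmono (hTnn n hn1)
        _ ≤ TT r σ (n+n) := hiter n hn n
    -- uniform doubling constant
    set b := min (Real.exp (-(2*C))) (TT r σ (2*N) / TT r σ 1) with hbdef
    have hb0 : 0 < b :=
      lt_min (Real.exp_pos _) (div_pos (hTpos (2*N) (by omega)) (hTpos 1 le_rfl))
    have hBT : ∀ n : ℕ, 1 ≤ n → b * TT r σ n ≤ TT r σ (2*n) := by
      intro n hn
      rcases le_or_gt N n with hcase | hcase
      · calc b * TT r σ n ≤ Real.exp (-(2*C)) * TT r σ n :=
              mul_le_mul_of_nonneg_right (min_le_left _ _) (hTnn n hn)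
          _ ≤ TT r σ (2*n) := hlarge n hcase
      · have hnN : n ≤ N := hcase.le
        have h1 : TT r σ n ≤ TT r σ 1 := TT_anti hr hpos hsum le_rfl hn
        have h2 : TT r σ (2*N) ≤ TT r σ (2*n) := TT_anti hr hpos hsum (by omega) (by omega)
        have hb2 : b ≤ TT r σ (2*N) / TT r σ 1 := min_le_right _ _
        have hT1 : 0 < TT r σ 1 := hTpos 1 le_rfl
        calc b * TT r σ n ≤ (TT r σ (2*N) / TT r σ 1) * TT r σ 1 := by
              exact mul_le_mul hb2 h1 (hTnn n hn)
                (div_nonneg (hTnn (2*N) (by omega)) (hTnn 1 le_rfl))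
          _ = TT r σ (2*N) := by field_simp
          _ ≤ TT r σ (2*n) := h2
    refine ⟨b ^ (1/r), 1, Real.rpow_pos_of_pos hb0 _, one_pos, ?_⟩
    intro n hn
    constructor
    · exact tail_le_of_T hr hb0.le (hTnn n hn) (hBT n hn)
    · rw [one_mul, tailSeq_eq, tailSeq_eq]
      exact Real.rpow_le_rpow (hTnn (2*n) (by omega))
        (TT_anti hr hpos hsum hn (by omega)) (by positivity)
end

section
/- Let r > 0 and let σ = (σ_k)_{k≥1} be a non-increasing sequence of positive real numbers with σ_k → 0 and ∑_{k≥1} σ_k^r < ∞, with tail sequence τ_n = (∑_{k≥n} σ_k^r)^{1/r}. If there exist constants c₁, c₂ > 0 such that c₁ σ_n ≤ σ_{2n} ≤ c₂ σ_n for all n ≥ 1, then there exist constants d₁, d₂ > 0 such that d₁ τ_n ≤ τ_{2n} ≤ d₂ τ_n for all n ≥ 1. If, in addition, there exists α > 1/r such that sup{ σ_n n^α / (σ_k k^α) : k ≤ n } < ∞, then the converse also holds, i.e. σ_n ≍ σ_{2n} if and only if τ_n ≍ τ_{2n}. -/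
/-!
Everything is transferred to `a_k = σ_k ^ r` and its tail sums `T_n = ∑_{k ≥ n} a_k = τ_n ^ r`:
lower doubling bounds survive taking powers, and the upper bounds `σ_{2n} ≤ σ_n`, `τ_{2n} ≤ τ_n`
are just monotonicity. If `c a_n ≤ a_{2n}`, then `T_n ≤ n a_n + T_{2n}` and
`c² n a_n ≤ n a_{4n} ≤ T_{2n}`. Conversely, the regularity hypothesis gives
`a_{mi} ≲ a_m i^{-αr}` with `αr > 1`, hence `T_m ≲ m a_m`; together with `n a_n ≲ T_{⌈n/2⌉}`
and `T_{⌈n/2⌉} ≲ T_{2n}` this yields `a_n ≲ a_{2n}`.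
-/

open Filter

open Finset

noncomputable def tailSum (a : ℕ → ℝ) (n : ℕ) : ℝ :=
  ∑' k, a (k + n)

section TailSum

variable {a : ℕ → ℝ}

lemma tailSum_nonneg (h0 : ∀ k, 0 ≤ a k) (n : ℕ) : 0 ≤ tailSum a n :=
  tsum_nonneg fun _ => h0 _

lemma tailSum_eq_sum_add (hs : Summable a) (m j : ℕ) :
    tailSum a m = ∑ i ∈ range j, a (i + m) + tailSum a (m + j) := by
  rw [tailSum, ← ((summable_nat_add_iff m).2 hs).sum_add_tsum_nat_add j, tailSum]
  congr 1
  exact tsum_congr fun i => by rw [add_right_comm, add_assoc]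

lemma tailSum_antitone (h0 : ∀ k, 0 ≤ a k) (hs : Summable a) : Antitone (tailSum a) := by
  intro m n hmn
  obtain ⟨j, rfl⟩ := Nat.exists_eq_add_of_le hmn
  rw [tailSum_eq_sum_add hs m j]
  exact le_add_of_nonneg_left (sum_nonneg fun i _ => h0 _)

lemma tailSum_le_mul_add (ha : Antitone a) (hs : Summable a) (m j : ℕ) :
    tailSum a m ≤ j * a m + tailSum a (m + j) := by
  rw [tailSum_eq_sum_add hs m j]
  gcongr
  simpa using sum_le_card_nsmul (range j) (fun i => a (i + m)) (a m)
    fun i _ => ha (Nat.le_add_left m i)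

lemma mul_le_tailSum (ha : Antitone a) (h0 : ∀ k, 0 ≤ a k) (hs : Summable a) (m j : ℕ) :
    (j + 1) * a (m + j) ≤ tailSum a m := by
  rw [tailSum_eq_sum_add hs m (j + 1)]
  have hsum : (j + 1) * a (m + j) ≤ ∑ i ∈ range (j + 1), a (i + m) := by
    simpa using card_nsmul_le_sum (range (j + 1)) (fun i => a (i + m)) (a (m + j))
      fun i hi => ha (by simp at hi; omega)
  linarith [tailSum_nonneg h0 (m + (j + 1))]

lemma sum_range_mul_le_of_antitone (ha : Antitone a) (m N : ℕ) :
    ∑ k ∈ range (m * N), a (k + m) ≤ ∑ i ∈ range N, m * a (m * (i + 1)) := by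
  induction N with
  | zero => simp
  | succ N ih =>
    rw [Nat.mul_succ, sum_range_add, sum_range_succ]
    gcongr
    simpa using sum_le_card_nsmul (range m) (fun j => a (m * N + j + m)) (a (m * (N + 1)))
      fun j _ => ha (by rw [Nat.mul_succ]; omega)

lemma tailSum_doubling_of_doubling (ha : Antitone a) (h0 : ∀ k, 0 ≤ a k) (hs : Summable a)
    {c : ℝ} (hc : 0 < c) (hdouble : ∀ n, 1 ≤ n → c * a n ≤ a (2 * n)) (n : ℕ) (hn : 1 ≤ n) :
    (1 + (2 * c ^ 2)⁻¹)⁻¹ * tailSum a n ≤ tailSum a (2 * n) := by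
  have hhead : tailSum a n ≤ n * a n + tailSum a (2 * n) := by
    simpa [two_mul] using tailSum_le_mul_add ha hs n n
  have hquad : c ^ 2 * a n ≤ a (2 * (2 * n)) := by
    have := hdouble (2 * n) (by omega)
    nlinarith [hdouble n hn]
  have hnext : (2 * n + 1 : ℝ) * a (2 * (2 * n)) ≤ tailSum a (2 * n) := by
    simpa [two_mul] using mul_le_tailSum ha h0 hs (2 * n) (2 * n)
  have hfirst : n * a n ≤ (2 * c ^ 2)⁻¹ * tailSum a (2 * n) := by
    rw [inv_mul_eq_div, le_div_iff₀ (by positivity)]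
    nlinarith [h0 (2 * (2 * n)), h0 n]
  rw [inv_mul_le_iff₀ (by positivity)]
  linarith

lemma doubling_of_tailSum_doubling (ha : Antitone a) (h0 : ∀ k, 0 ≤ a k) (hs : Summable a)
    {K e : ℝ} (hK : 0 < K) (he : 0 < e) (htail : ∀ m, 1 ≤ m → tailSum a m ≤ K * m * a m)
    (hdouble : ∀ n, 1 ≤ n → e * tailSum a n ≤ tailSum a (2 * n)) (n : ℕ) (hn : 1 ≤ n) :
    e ^ 2 / (4 * K) * a n ≤ a (2 * n) := by
  obtain ⟨m, j, rfl, hm, hmj, hjm⟩ : ∃ m j, m + j = n ∧ 1 ≤ m ∧ j ≤ m ∧ m ≤ j + 1 :=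
    ⟨(n + 1) / 2, n / 2, by omega, by omega, by omega, by omega⟩
  have hhead := mul_le_tailSum ha h0 hs m j
  have hmid : e * tailSum a m ≤ tailSum a (m + j) :=
    (hdouble m hm).trans (tailSum_antitone h0 hs (by omega))
  have hlast : e * tailSum a (m + j) ≤ K * (2 * (m + j) : ℕ) * a (2 * (m + j)) :=
    (hdouble _ (by omega)).trans (htail _ (by omega))
  have hcount : ((m + j : ℕ) : ℝ) ≤ 2 * (j + 1) := by push_cast; norm_cast; omega
  push_cast at hlast hcount
  have hchain : ((j : ℝ) + 1) * (e ^ 2 * a (m + j)) ≤ ((j : ℝ) + 1) * (4 * K * a (2 * (m + j))) :=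
    calc ((j : ℝ) + 1) * (e ^ 2 * a (m + j)) ≤ e * (e * tailSum a m) := by
          nlinarith [mul_le_mul_of_nonneg_left hhead (sq_nonneg e)]
      _ ≤ e * tailSum a (m + j) := mul_le_mul_of_nonneg_left hmid he.le
      _ ≤ K * (2 * (m + j)) * a (2 * (m + j)) := hlast
      _ ≤ ((j : ℝ) + 1) * (4 * K * a (2 * (m + j))) := by
          nlinarith [mul_le_mul_of_nonneg_left hcount (mul_nonneg hK.le (h0 (2 * (m + j))))]
  rw [div_mul_eq_mul_div, div_le_iff₀ (by positivity), mul_comm (a _)]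
  exact le_of_mul_le_mul_left hchain (by positivity)

/-- Split the tail into blocks of `m` terms: the `i`-th block is at most
`m * a (m * i) ≤ C * m * a m * i ^ (-β)`, and `∑ i ^ (-β)` converges. -/
lemma tailSum_le_of_regular (ha : Antitone a) (h0 : ∀ k, 0 ≤ a k) {β C : ℝ} (hβ : 1 < β)
    (hC : 0 < C) (hreg : ∀ m i, 1 ≤ m → 1 ≤ i → a (m * i) * (i : ℝ) ^ β ≤ C * a m) :
    ∃ K, 0 < K ∧ ∀ m, 1 ≤ m → tailSum a m ≤ K * m * a m := by
  have hZ : Summable fun i : ℕ => (((i + 1 : ℕ) : ℝ) ^ β)⁻¹ :=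
    (summable_nat_add_iff 1).2 (Real.summable_nat_rpow_inv.2 hβ)
  refine ⟨C * ∑' i : ℕ, (((i + 1 : ℕ) : ℝ) ^ β)⁻¹,
    mul_pos hC (hZ.tsum_pos (fun _ => by positivity) 0 (by positivity)), fun m hm => ?_⟩
  have hterm (i : ℕ) : a (m * (i + 1)) ≤ C * a m * (((i + 1 : ℕ) : ℝ) ^ β)⁻¹ := by
    rw [← div_eq_mul_inv, le_div_iff₀ (by positivity)]
    exact hreg m (i + 1) hm (by omega)
  refine Real.tsum_le_of_sum_range_le (fun _ => h0 _) fun N => ?_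
  calc ∑ k ∈ range N, a (k + m)
      ≤ ∑ k ∈ range (m * N), a (k + m) :=
        sum_le_sum_of_subset_of_nonneg (range_subset_range.2 (Nat.le_mul_of_pos_left N hm))
          fun _ _ _ => h0 _
    _ ≤ ∑ i ∈ range N, m * a (m * (i + 1)) := sum_range_mul_le_of_antitone ha m N
    _ ≤ ∑ i ∈ range N, m * (C * a m * (((i + 1 : ℕ) : ℝ) ^ β)⁻¹) := by
        gcongr with i; exact hterm i
    _ = C * m * a m * ∑ i ∈ range N, (((i + 1 : ℕ) : ℝ) ^ β)⁻¹ := by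
        rw [mul_sum]; exact sum_congr rfl fun _ _ => by ring
    _ ≤ C * m * a m * ∑' i : ℕ, (((i + 1 : ℕ) : ℝ) ^ β)⁻¹ := by
        gcongr
        · exact mul_nonneg (by positivity) (h0 m)
        · exact hZ.sum_le_tsum _ fun _ _ => by positivity
    _ = _ := by ring

end TailSum

def IsDoubling (f : ℕ → ℝ) : Prop :=
  ∃ c₁ c₂ : ℝ, 0 < c₁ ∧ 0 < c₂ ∧ ∀ n : ℕ, 1 ≤ n → c₁ * f n ≤ f (2 * n) ∧ f (2 * n) ≤ c₂ * f n

lemma IsDoubling.of_lower {f : ℕ → ℝ} (hf : ∀ n, 1 ≤ n → f (2 * n) ≤ f n) {c : ℝ} (hc : 0 < c)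
    (h : ∀ n, 1 ≤ n → c * f n ≤ f (2 * n)) : IsDoubling f :=
  ⟨c, 1, hc, one_pos, fun n hn => ⟨h n hn, (one_mul (f n)).symm ▸ hf n hn⟩⟩

lemma mul_rpow_le_rpow_two_mul {f : ℕ → ℝ} {c p : ℝ} (hf : ∀ n, 1 ≤ n → 0 ≤ f n) (hc : 0 ≤ c)
    (hp : 0 ≤ p) (h : ∀ n, 1 ≤ n → c * f n ≤ f (2 * n)) (n : ℕ) (hn : 1 ≤ n) :
    c ^ p * f n ^ p ≤ f (2 * n) ^ p := by
  rw [← Real.mul_rpow hc (hf n hn)]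
  exact Real.rpow_le_rpow (mul_nonneg hc (hf n hn)) (h n hn) hp

/-- `σ_k ^ r`, with the index `0` read as `1` so that the sequence is antitone and nonnegative
on all of `ℕ`. -/
noncomputable def powSeq (r : ℝ) (σ : ℕ → ℝ) (k : ℕ) : ℝ :=
  σ (max k 1) ^ r

section PowSeq

variable {r : ℝ} {σ : ℕ → ℝ}

lemma powSeq_of_one_le {k : ℕ} (hk : 1 ≤ k) : powSeq r σ k = σ k ^ r := by
  rw [powSeq, max_eq_left hk]

lemma powSeq_nonneg (hpos : ∀ k, 1 ≤ k → 0 < σ k) (k : ℕ) : 0 ≤ powSeq r σ k :=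
  Real.rpow_nonneg (hpos _ (le_max_right k 1)).le r

lemma powSeq_antitone (hr : 0 < r) (hpos : ∀ k, 1 ≤ k → 0 < σ k)
    (hanti : ∀ m n : ℕ, 1 ≤ m → m ≤ n → σ n ≤ σ m) : Antitone (powSeq r σ) := fun k l hkl =>
  Real.rpow_le_rpow (hpos _ (le_max_right l 1)).le
    (hanti _ _ (le_max_right k 1) (max_le_max_right 1 hkl)) hr.le

lemma powSeq_summable (hsum : Summable (fun k : ℕ => if 1 ≤ k then σ k ^ r else 0)) :
    Summable (powSeq r σ) := by
  refine (summable_nat_add_iff 1).1 ?_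
  refine ((summable_nat_add_iff 1).2 hsum).congr fun k => ?_
  simp [powSeq_of_one_le (Nat.le_add_left 1 k)]

lemma tailSeq_eq_tailSum_powSeq {n : ℕ} (hn : 1 ≤ n) :
    tailSeq r σ n = tailSum (powSeq r σ) n ^ (1 / r) := by
  rw [tailSeq, tailSum, ← (add_left_injective n).tsum_eq]
  · congr 1
    exact tsum_congr fun k => by simp [powSeq_of_one_le (show 1 ≤ k + n by omega)]
  · intro k hk
    have : n ≤ k := by by_contra h; simp [h] at hk
    exact ⟨k - n, Nat.sub_add_cancel this⟩

end PowSeq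

section Doubling

variable {r : ℝ} {σ : ℕ → ℝ}

lemma one_le_of_regular (hpos : ∀ k, 1 ≤ k → 0 < σ k) {α C : ℝ}
    (hreg : ∀ k n : ℕ, 1 ≤ k → k ≤ n → σ n * (n : ℝ) ^ α / (σ k * (k : ℝ) ^ α) ≤ C) : 1 ≤ C := by
  simpa [div_self (hpos 1 le_rfl).ne'] using hreg 1 1 le_rfl le_rfl

lemma powSeq_mul_rpow_le (hr : 0 < r) (hpos : ∀ k, 1 ≤ k → 0 < σ k) {α C : ℝ}
    (hreg : ∀ k n : ℕ, 1 ≤ k → k ≤ n → σ n * (n : ℝ) ^ α / (σ k * (k : ℝ) ^ α) ≤ C)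
    (m i : ℕ) (hm : 1 ≤ m) (hi : 1 ≤ i) :
    powSeq r σ (m * i) * (i : ℝ) ^ (α * r) ≤ C ^ r * powSeq r σ m := by
  have hmi : 1 ≤ m * i := Nat.one_le_iff_ne_zero.2 (by positivity)
  have hσ : σ (m * i) * (i : ℝ) ^ α ≤ C * σ m := by
    have h := hreg m (m * i) hm (Nat.le_mul_of_pos_right m hi)
    have hmα : 0 < (m : ℝ) ^ α := by positivity
    rw [div_le_iff₀ (mul_pos (hpos m hm) hmα), Nat.cast_mul,
      Real.mul_rpow (Nat.cast_nonneg m) (Nat.cast_nonneg i)] at h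
    exact le_of_mul_le_mul_right (by linarith) hmα
  rw [powSeq_of_one_le hmi, powSeq_of_one_le hm, Real.rpow_mul (Nat.cast_nonneg i),
    ← Real.mul_rpow (hpos _ hmi).le (by positivity),
    ← Real.mul_rpow (by linarith [one_le_of_regular hpos hreg]) (hpos m hm).le]
  exact Real.rpow_le_rpow (mul_nonneg (hpos _ hmi).le (by positivity)) hσ hr.le

lemma isDoubling_tailSeq_of_isDoubling (hr : 0 < r) (hpos : ∀ k, 1 ≤ k → 0 < σ k)
    (hanti : ∀ m n : ℕ, 1 ≤ m → m ≤ n → σ n ≤ σ m)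
    (hsum : Summable (fun k : ℕ => if 1 ≤ k then σ k ^ r else 0)) (h : IsDoubling σ) :
    IsDoubling (tailSeq r σ) := by
  obtain ⟨c₁, _, hc₁, -, hσ⟩ := h
  have ha := powSeq_antitone hr hpos hanti
  have h0 := powSeq_nonneg (r := r) hpos
  have hs := powSeq_summable hsum
  have hpow (n : ℕ) (hn : 1 ≤ n) : c₁ ^ r * powSeq r σ n ≤ powSeq r σ (2 * n) := by
    rw [powSeq_of_one_le hn, powSeq_of_one_le (by omega)]
    exact mul_rpow_le_rpow_two_mul (fun n hn => (hpos n hn).le) hc₁.le hr.le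
      (fun n hn => (hσ n hn).1) n hn
  have htail := tailSum_doubling_of_doubling ha h0 hs (Real.rpow_pos_of_pos hc₁ r) hpow
  refine IsDoubling.of_lower (c := (1 + (2 * (c₁ ^ r) ^ 2)⁻¹)⁻¹ ^ (1 / r)) (fun n hn => ?_)
    (by positivity) (fun n hn => ?_)
  · rw [tailSeq_eq_tailSum_powSeq hn, tailSeq_eq_tailSum_powSeq (by omega)]
    exact Real.rpow_le_rpow (tailSum_nonneg h0 _) (tailSum_antitone h0 hs (by omega))
      (by positivity)
  · rw [tailSeq_eq_tailSum_powSeq hn, tailSeq_eq_tailSum_powSeq (by omega)]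
    exact mul_rpow_le_rpow_two_mul (fun n _ => tailSum_nonneg h0 n) (by positivity)
      (by positivity) htail n hn

lemma isDoubling_of_isDoubling_tailSeq (hr : 0 < r) (hpos : ∀ k, 1 ≤ k → 0 < σ k)
    (hanti : ∀ m n : ℕ, 1 ≤ m → m ≤ n → σ n ≤ σ m)
    (hsum : Summable (fun k : ℕ => if 1 ≤ k then σ k ^ r else 0)) {α C : ℝ} (hα : 1 / r < α)
    (hreg : ∀ k n : ℕ, 1 ≤ k → k ≤ n → σ n * (n : ℝ) ^ α / (σ k * (k : ℝ) ^ α) ≤ C)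
    (h : IsDoubling (tailSeq r σ)) : IsDoubling σ := by
  obtain ⟨d, _, hd, -, hτ⟩ := h
  have ha := powSeq_antitone hr hpos hanti
  have h0 := powSeq_nonneg (r := r) hpos
  have hs := powSeq_summable hsum
  have hτ_eq (n : ℕ) (hn : 1 ≤ n) : tailSeq r σ n ^ r = tailSum (powSeq r σ) n := by
    rw [tailSeq_eq_tailSum_powSeq hn, one_div, Real.rpow_inv_rpow (tailSum_nonneg h0 n) hr.ne']
  have htail (n : ℕ) (hn : 1 ≤ n) :
      d ^ r * tailSum (powSeq r σ) n ≤ tailSum (powSeq r σ) (2 * n) := by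
    rw [← hτ_eq n hn, ← hτ_eq (2 * n) (by omega)]
    refine mul_rpow_le_rpow_two_mul (fun n hn => ?_) hd.le hr.le (fun n hn => (hτ n hn).1) n hn
    rw [tailSeq_eq_tailSum_powSeq hn]
    exact Real.rpow_nonneg (tailSum_nonneg h0 n) _
  have hβ : 1 < α * r := by rwa [div_lt_iff₀ hr] at hα
  obtain ⟨K, hK, hK_tail⟩ := tailSum_le_of_regular ha h0 hβ
    (Real.rpow_pos_of_pos (by linarith [one_le_of_regular hpos hreg]) r)
    (powSeq_mul_rpow_le hr hpos hreg)
  have hpow := doubling_of_tailSum_doubling ha h0 hs hK (Real.rpow_pos_of_pos hd r) hK_tail htail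
  refine IsDoubling.of_lower (c := ((d ^ r) ^ 2 / (4 * K)) ^ r⁻¹)
    (fun n hn => hanti n (2 * n) hn (by omega)) (by positivity) (fun n hn => ?_)
  have := mul_rpow_le_rpow_two_mul (p := r⁻¹) (fun n _ => h0 n) (by positivity)
    (by positivity) hpow n hn
  rwa [powSeq_of_one_le hn, powSeq_of_one_le (by omega),
    Real.rpow_rpow_inv (hpos n hn).le hr.ne', Real.rpow_rpow_inv (hpos _ (by omega)).le hr.ne']
    at this

end Doubling

theorem statement19_general (r : ℝ) (hr : 0 < r) (σ : ℕ → ℝ)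
    (hpos : ∀ k, 1 ≤ k → 0 < σ k)
    (hanti : ∀ m n : ℕ, 1 ≤ m → m ≤ n → σ n ≤ σ m)
    (hsum : Summable (fun k : ℕ => if 1 ≤ k then σ k ^ r else 0)) :
    ((∃ c₁ c₂ : ℝ, 0 < c₁ ∧ 0 < c₂ ∧ ∀ n : ℕ, 1 ≤ n →
        c₁ * σ n ≤ σ (2 * n) ∧ σ (2 * n) ≤ c₂ * σ n) →
      (∃ d₁ d₂ : ℝ, 0 < d₁ ∧ 0 < d₂ ∧ ∀ n : ℕ, 1 ≤ n →
        d₁ * tailSeq r σ n ≤ tailSeq r σ (2 * n) ∧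
        tailSeq r σ (2 * n) ≤ d₂ * tailSeq r σ n)) ∧
    ((∃ α : ℝ, 1 / r < α ∧ ∃ C : ℝ, ∀ k n : ℕ, 1 ≤ k → k ≤ n →
        σ n * (n : ℝ) ^ α / (σ k * (k : ℝ) ^ α) ≤ C) →
      ((∃ c₁ c₂ : ℝ, 0 < c₁ ∧ 0 < c₂ ∧ ∀ n : ℕ, 1 ≤ n →
          c₁ * σ n ≤ σ (2 * n) ∧ σ (2 * n) ≤ c₂ * σ n) ↔
        (∃ d₁ d₂ : ℝ, 0 < d₁ ∧ 0 < d₂ ∧ ∀ n : ℕ, 1 ≤ n →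
          d₁ * tailSeq r σ n ≤ tailSeq r σ (2 * n) ∧
          tailSeq r σ (2 * n) ≤ d₂ * tailSeq r σ n))) := by
  have forward := isDoubling_tailSeq_of_isDoubling hr hpos hanti hsum
  exact ⟨forward, fun ⟨α, hα, C, hreg⟩ =>
    ⟨forward, isDoubling_of_isDoubling_tailSeq hr hpos hanti hsum hα hreg⟩⟩

/-- **Lemma (Tail Sequence), part (iii).**
For `r > 0` and a non-increasing positive sequence `σ` (indexed from 1) tending to zero
with `∑_{k≥1} σ_k^r < ∞`: the doubling condition `σ_n ≍ σ_{2n}` implies the doubling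
condition `τ_n ≍ τ_{2n}` for the tail sequence; and if in addition
`∃ α > 1/r, sup_{k ≤ n} σ_n n^α / (σ_k k^α) < ∞` holds, then `σ_n ≍ σ_{2n}` holds if and
only if `τ_n ≍ τ_{2n}` holds. -/
theorem statement19 (r : ℝ) (hr : 0 < r) (σ : ℕ → ℝ)
    (hpos : ∀ k, 1 ≤ k → 0 < σ k)
    (hanti : ∀ m n : ℕ, 1 ≤ m → m ≤ n → σ n ≤ σ m)
    (hlim : Tendsto σ atTop (nhds 0))
    (hsum : Summable (fun k : ℕ => if 1 ≤ k then σ k ^ r else 0)) :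
    ((∃ c₁ c₂ : ℝ, 0 < c₁ ∧ 0 < c₂ ∧ ∀ n : ℕ, 1 ≤ n →
        c₁ * σ n ≤ σ (2 * n) ∧ σ (2 * n) ≤ c₂ * σ n) →
      (∃ d₁ d₂ : ℝ, 0 < d₁ ∧ 0 < d₂ ∧ ∀ n : ℕ, 1 ≤ n →
        d₁ * tailSeq r σ n ≤ tailSeq r σ (2 * n) ∧
        tailSeq r σ (2 * n) ≤ d₂ * tailSeq r σ n)) ∧
    ((∃ α : ℝ, 1 / r < α ∧ ∃ C : ℝ, ∀ k n : ℕ, 1 ≤ k → k ≤ n →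
        σ n * (n : ℝ) ^ α / (σ k * (k : ℝ) ^ α) ≤ C) →
      ((∃ c₁ c₂ : ℝ, 0 < c₁ ∧ 0 < c₂ ∧ ∀ n : ℕ, 1 ≤ n →
          c₁ * σ n ≤ σ (2 * n) ∧ σ (2 * n) ≤ c₂ * σ n) ↔
        (∃ d₁ d₂ : ℝ, 0 < d₁ ∧ 0 < d₂ ∧ ∀ n : ℕ, 1 ≤ n →
          d₁ * tailSeq r σ n ≤ tailSeq r σ (2 * n) ∧
          tailSeq r σ (2 * n) ≤ d₂ * tailSeq r σ n))) :=
  statement19_general r hr σ hpos hanti hsum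
end
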